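/- arXiv:2111.12489 — 4 statements merged into one kernel-verified Lean document; each statement's English description precedes it below -/
import Mathlib

section
/- Let p be an odd prime, m ≥ 1, 2 ≤ t ≤ p − 1, and let λ_0 be a nonzero element of F_{p^m}. Then the code C_t(1, p, λ_0) is a linear code over F_{p^m} of length p, dimension p − t, minimum distance t + 1, and minimum locality p − t; in particular it is an MDS code (d = n − k + 1) and an optimal LRC, i.e., t + 1 = p − (p − t) − ⌈(p − t)/(p − t)⌉ + 2. -/
open Polynomial

variable {F : Type} [Field F] [Fintype F] [DecidableEq F]

/-- `d` is the minimum distance (minimum Hamming weight of a nonzero codeword) of `Cset`. -/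
def minDistIs {n : ℕ} (Cset : Set (Fin n → F)) (d : ℕ) : Prop :=
  IsLeast {w : ℕ | ∃ c ∈ Cset, c ≠ 0 ∧ hammingNorm c = w} d

/-- The `i`-th code symbol of `Cset` has locality `r`. -/
def symbolLocality {n : ℕ} (Cset : Set (Fin n → F)) (i : Fin n) (r : ℕ) : Prop :=
  ∃ I : Finset (Fin n), i ∉ I ∧ I.card ≤ r ∧
    ∃ f : ({x : Fin n // x ∈ I} → F) → F, ∀ c ∈ Cset, c i = f (fun j => c j.1)

/-- `Cset` has all-symbol locality `r`. -/
def hasAllSymbolLocality {n : ℕ} (Cset : Set (Fin n → F)) (r : ℕ) : Prop :=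
  ∀ i : Fin n, symbolLocality Cset i r

/-- `r` is the minimum locality of `Cset`. -/
def minLocalityIs {n : ℕ} (Cset : Set (Fin n → F)) (r : ℕ) : Prop :=
  IsLeast {r' : ℕ | hasAllSymbolLocality Cset r'} r

/-- The λ-constacyclic code of length `n` corresponding to the ideal generated by (the image of)
`g` in `F[x]/⟨x^n − λ⟩`, viewed as a set of vectors via the coefficient identification. -/
def codeOfGen (n : ℕ) (lam : F) (g : F[X]) : Set (Fin n → F) :=
  {c | (∑ j : Fin n, Polynomial.C (c j) * X ^ (j : ℕ)) ∈ Ideal.span {g, X ^ n - Polynomial.C lam}}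

/-- The code `C_i(η, p^s, λ₀)`: the λ-constacyclic code of length `η p^s`
generated by `(x^η − λ₀)^i`, where `λ = λ₀^{p^s}`. -/
def Ci (p η s i : ℕ) (lam0 : F) : Set (Fin (η * p ^ s) → F) :=
  codeOfGen (η * p ^ s) (lam0 ^ p ^ s) ((X ^ η - Polynomial.C lam0) ^ i)

/-- The code `C_{i,j}(2p^s, λ₀)` with `λ₀ = δ²`: the λ-constacyclic code of length `2 p^s`
generated by `(x − δ)^i (x + δ)^j`, where `λ = λ₀^{p^s}`. -/
def Cij (p s i j : ℕ) (δ : F) : Set (Fin (2 * p ^ s) → F) :=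
  codeOfGen (2 * p ^ s) ((δ ^ 2) ^ p ^ s) ((X - Polynomial.C δ) ^ i * (X + Polynomial.C δ) ^ j)

/-- `V_t = Π_j (t_j + 1)` over the base-`p` digits `t_j` of `t`. -/
def Vdig (p t : ℕ) : ℕ := ((Nat.digits p t).map (· + 1)).prod

/-- Ceiling division `⌈a / b⌉` of natural numbers. -/
def nceil (a b : ℕ) : ℕ := (a + b - 1) / b

/-- `Cset` is an optimal LRC: for its dimension `k`, minimum distance `d` and minimum
locality `r`, the Singleton-like bound `d = n − k − ⌈k/r⌉ + 2` is met with equality. -/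
def optimalLRC {n : ℕ} (Cset : Set (Fin n → F)) : Prop :=
  ∃ k d r : ℕ, Nat.card Cset = Fintype.card F ^ k ∧ minDistIs Cset d ∧
    minLocalityIs Cset r ∧ (d : ℤ) = (n : ℤ) - (k : ℤ) - (nceil k r : ℤ) + 2

section Aux
set_option linter.unusedSectionVars false
open Finset

noncomputable def polyOf {n : ℕ} (c : Fin n → F) : F[X] := ∑ j : Fin n, C (c j) * X ^ (j : ℕ)

lemma coeff_polyOf {n : ℕ} (c : Fin n → F) (k : ℕ) :
    (polyOf c).coeff k = if h : k < n then c ⟨k, h⟩ else 0 := by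
  rw [polyOf, finset_sum_coeff]
  simp only [coeff_C_mul, coeff_X_pow, mul_ite, mul_one, mul_zero]
  split
  · next h =>
    rw [Finset.sum_eq_single (⟨k, h⟩ : Fin n)]
    · rw [if_pos rfl]
    · intro j _ hj
      exact if_neg fun hk => hj (Fin.ext hk.symm)
    · simp
  · next h =>
    apply Finset.sum_eq_zero
    intro j _
    rw [if_neg]
    omega

lemma polyOf_inj {n : ℕ} {c c' : Fin n → F} (h : polyOf c = polyOf c') : c = c' := by
  funext j
  have := congrArg (fun q => Polynomial.coeff q (j : ℕ)) h
  simpa [coeff_polyOf, j.isLt] using this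

lemma polyOf_zero {n : ℕ} : polyOf (0 : Fin n → F) = 0 := by simp [polyOf]

lemma polyOf_sub {n : ℕ} (c c' : Fin n → F) : polyOf (c - c') = polyOf c - polyOf c' := by
  simp [polyOf, sub_mul, Finset.sum_sub_distrib]

lemma degree_polyOf_lt {n : ℕ} (c : Fin n → F) : (polyOf c).degree < n := by
  rw [degree_lt_iff_coeff_zero]
  intro k hk
  rw [coeff_polyOf, dif_neg]
  exact fun h => absurd hk (by exact_mod_cast not_le.mpr (Nat.cast_lt.mpr h))

lemma polyOf_coeff {n : ℕ} (q : F[X]) (hq : q.degree < n) :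
    polyOf (fun j : Fin n => q.coeff (j : ℕ)) = q := by
  ext k
  rw [coeff_polyOf]
  split
  · rfl
  · next h =>
    exact (coeff_eq_zero_of_degree_lt (lt_of_lt_of_le hq (by exact_mod_cast not_lt.mp h))).symm

noncomputable def theta (f : F[X]) : F[X] := X * derivative f

lemma theta_dvd {a : F} {k : ℕ} {f : F[X]} (h : (X - C a) ^ (k + 1) ∣ f) :
    (X - C a) ^ k ∣ theta f := by
  obtain ⟨h1, rfl⟩ := h
  rw [theta, derivative_mul, derivative_pow, mul_add]
  apply dvd_add
  · exact ⟨X * (C ((k:F) + 1) * derivative (X - C a) * h1), by push_cast; ring⟩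
  · exact ⟨X * ((X - C a) * derivative h1), by ring⟩

lemma theta_iter_dvd {a : F} {t : ℕ} {f : F[X]} (h : (X - C a) ^ t ∣ f) :
    ∀ j, j ≤ t → (X - C a) ^ (t - j) ∣ theta^[j] f := by
  intro j
  induction j with
  | zero => simpa using h
  | succ j ih =>
    intro hj
    rw [Function.iterate_succ_apply']
    have : t - j = (t - (j + 1)) + 1 := by omega
    exact theta_dvd (this ▸ ih (by omega))

noncomputable def Qp {n : ℕ} (c : Fin n → F) (j : ℕ) : F[X] :=
  ∑ i : Fin n, C (c i * ((i : ℕ) : F) ^ j) * X ^ (i : ℕ)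

lemma Qp_zero {n : ℕ} (c : Fin n → F) : Qp c 0 = polyOf c := by
  simp [Qp, polyOf]

lemma theta_single (b : F) (i : ℕ) : theta (C b * X ^ i) = C (b * (i : F)) * X ^ i := by
  rw [theta, derivative_C_mul, derivative_X_pow]
  rcases Nat.eq_zero_or_pos i with hi | hi
  · subst hi; simp
  · rw [C_mul]
    have : X * (C b * (C (i : F) * X ^ (i - 1))) = C b * C (i:F) * (X * X ^ (i-1)) := by ring
    rw [this, ← pow_succ']
    congr 2
    omega

lemma theta_Qp {n : ℕ} (c : Fin n → F) (j : ℕ) : theta (Qp c j) = Qp c (j + 1) := by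
  rw [Qp, theta]
  rw [map_sum derivative, Finset.mul_sum]
  rw [Qp]
  apply Finset.sum_congr rfl
  intro i _
  have := theta_single (b := c i * ((i : ℕ) : F) ^ j) (i := (i : ℕ))
  rw [theta] at this
  rw [this, pow_succ]
  ring_nf

lemma theta_iter_Qp {n : ℕ} (c : Fin n → F) (j : ℕ) : theta^[j] (polyOf c) = Qp c j := by
  induction j with
  | zero => simp [Qp_zero]
  | succ j ih => rw [Function.iterate_succ_apply', ih, theta_Qp]

lemma eval_Qp {n : ℕ} (c : Fin n → F) (j : ℕ) (a : F) :
    eval a (Qp c j) = ∑ i : Fin n, c i * ((i : ℕ) : F) ^ j * a ^ (i : ℕ) := by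
  rw [Qp, eval_finset_sum]
  simp

lemma key_weight {p n t : ℕ} [hfp : Fact p.Prime] [CharP F p] (hn : n ≤ p)
    (a : F) (ha : a ≠ 0) (c : Fin n → F)
    (hdvd : (X - C a) ^ t ∣ polyOf c) (hw : hammingNorm c ≤ t) : c = 0 := by
  set S : Finset (Fin n) := Finset.univ.filter (fun i => c i ≠ 0) with hS
  have hwS : S.card = hammingNorm c := rfl
  have hsum : ∀ j, j < t → ∑ i ∈ S, (c i * a ^ (i : ℕ)) * ((i : ℕ) : F) ^ j = 0 := by
    intro j hj
    have h1 : (X - C a) ∣ Qp c j := by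
      have := theta_iter_dvd hdvd j (le_of_lt hj)
      rw [theta_iter_Qp] at this
      exact dvd_trans (dvd_pow_self _ (by omega : t - j ≠ 0)) this
    have h2 : eval a (Qp c j) = 0 := by
      obtain ⟨q, hq⟩ := h1
      rw [hq]; simp
    rw [eval_Qp] at h2
    have hz : ∀ x ∈ Finset.univ, x ∉ S → c x * ((x:ℕ):F)^j * a^(x:ℕ) = 0 := by
      intro i _ hi
      have : c i = 0 := by
        by_contra hc
        exact hi (Finset.mem_filter.mpr ⟨Finset.mem_univ i, hc⟩)
      simp [this]
    rw [← Finset.sum_subset (Finset.subset_univ S) hz] at h2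
    rw [← h2]
    exact Finset.sum_congr rfl (fun i _ => by ring)
  set w := S.card with hw'
  have hwt : w ≤ t := hwS ▸ hw
  let e := S.equivFin
  let σ : Fin w → Fin n := fun k => (e.symm k : Fin n)
  have hσinj : Function.Injective σ := fun k k' h => e.symm.injective (Subtype.ext h)
  let v : Fin w → F := fun k => ((σ k : ℕ) : F)
  have hvinj : Function.Injective v := by
    intro k k' h
    apply hσinj
    have := CharP.natCast_injOn_Iio F p (by exact lt_of_lt_of_le (σ k).isLt hn)
      (by exact lt_of_lt_of_le (σ k').isLt hn) h
    exact Fin.ext this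
  let u : Fin w → F := fun k => c (σ k) * a ^ ((σ k : ℕ))
  have hM : ((Matrix.vandermonde v).transpose).mulVec u = 0 := by
    funext j
    have : ((Matrix.vandermonde v).transpose).mulVec u j
        = ∑ k : Fin w, (c (σ k) * a ^ ((σ k : ℕ))) * ((σ k : ℕ) : F) ^ (j : ℕ) := by
      rw [Matrix.mulVec]
      apply Finset.sum_congr rfl
      intro k _
      simp [Matrix.vandermonde, Matrix.transpose_apply, u, v]
      ring
    rw [this]
    have heq : ∑ k : Fin w, (c (σ k) * a ^ ((σ k : ℕ))) * ((σ k : ℕ) : F) ^ (j : ℕ)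
        = ∑ i ∈ S, (c i * a ^ (i : ℕ)) * ((i : ℕ) : F) ^ (j : ℕ) := by
      rw [← Finset.sum_attach S (fun i => (c i * a ^ (i : ℕ)) * ((i : ℕ) : F) ^ (j : ℕ))]
      exact Equiv.sum_comp e.symm
        (fun x : {x // x ∈ S} => (c ↑x * a ^ ((x : Fin n) : ℕ)) * (((x : Fin n) : ℕ) : F) ^ (j : ℕ))
    rw [heq]
    have := hsum (j : ℕ) (lt_of_lt_of_le j.isLt hwt)
    simpa using this
  have hdet : ((Matrix.vandermonde v).transpose).det ≠ 0 := by
    rw [Matrix.det_transpose]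
    exact Matrix.det_vandermonde_ne_zero_iff.mpr hvinj
  have hu : u = 0 := Matrix.eq_zero_of_mulVec_eq_zero hdet hM
  funext i
  by_contra hc
  have hiS : i ∈ S := Finset.mem_filter.mpr ⟨Finset.mem_univ i, hc⟩
  have : u (e ⟨i, hiS⟩) = 0 := by rw [hu]; rfl
  simp only [u] at this
  have hσi : σ (e ⟨i, hiS⟩) = i := by
    show ((e.symm (e ⟨i, hiS⟩)) : Fin n) = i
    rw [e.symm_apply_apply]
  rw [hσi] at this
  rcases mul_eq_zero.mp this with h | h
  · exact hc h
  · exact (pow_ne_zero _ ha) h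

lemma mem_codeOfGen_iff {n : ℕ} (lam : F) (g : F[X]) (hg : g ∣ (X ^ n - C lam)) (c : Fin n → F) :
    c ∈ codeOfGen n lam g ↔ g ∣ polyOf c := by
  have hspan : Ideal.span ({g, X ^ n - C lam} : Set F[X]) = Ideal.span {g} := by
    apply le_antisymm
    · rw [Ideal.span_le]
      rintro x (rfl | hx)
      · exact Ideal.subset_span rfl
      · rw [Set.mem_singleton_iff] at hx
        subst hx
        exact Ideal.mem_span_singleton.mpr hg
    · exact Ideal.span_mono (by simp)
  have h0 : c ∈ codeOfGen n lam g ↔ polyOf c ∈ Ideal.span ({g, X ^ n - C lam} : Set F[X]) :=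
    Iff.rfl
  rw [h0, hspan, Ideal.mem_span_singleton]

noncomputable def enc {n : ℕ} (t : ℕ) (a : F) (h : Fin (n - t) → F) : Fin n → F :=
  fun j => ((X - C a) ^ t * polyOf h).coeff (j : ℕ)

lemma degree_g_mul_lt {n t : ℕ} (ht : t < n) (a : F) (h : Fin (n - t) → F) :
    ((X - C a) ^ t * polyOf h).degree < (n : WithBot ℕ) := by
  rcases eq_or_ne (polyOf h) 0 with h0 | h0
  · rw [h0, mul_zero, degree_zero]
    exact_mod_cast WithBot.bot_lt_coe n
  · have hG0 : ((X - C a) ^ t) ≠ 0 := pow_ne_zero _ (X_sub_C_ne_zero a)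
    have hmul0 : (X - C a) ^ t * polyOf h ≠ 0 := mul_ne_zero hG0 h0
    rw [← natDegree_lt_iff_degree_lt hmul0]
    rw [natDegree_mul hG0 h0]
    have h1 : ((X - C a) ^ t).natDegree = t := by
      simp [natDegree_pow]
    have h2 : (polyOf h).natDegree < n - t :=
      (natDegree_lt_iff_degree_lt h0).mpr (degree_polyOf_lt h)
    omega

lemma polyOf_enc {n t : ℕ} (ht : t < n) (a : F) (h : Fin (n - t) → F) :
    polyOf (enc t a h) = (X - C a) ^ t * polyOf h :=
  polyOf_coeff _ (degree_g_mul_lt ht a h)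

lemma enc_inj {n t : ℕ} (ht : t < n) (a : F) : Function.Injective (enc (n := n) t a) := by
  intro h1 h2 he
  have := congrArg polyOf he
  rw [polyOf_enc ht, polyOf_enc ht] at this
  exact polyOf_inj (mul_left_cancel₀ (pow_ne_zero _ (X_sub_C_ne_zero a)) this)

lemma enc_sub {n t : ℕ} (a : F) (h1 h2 : Fin (n - t) → F) :
    enc (n := n) t a (h1 - h2) = enc t a h1 - enc t a h2 := by
  funext j
  simp [enc, polyOf_sub, mul_sub, coeff_sub]

lemma dvd_iff_enc {n t : ℕ} (ht : t < n) (a : F) (c : Fin n → F) :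
    (X - C a) ^ t ∣ polyOf c ↔ ∃ h, enc t a h = c := by
  constructor
  · rintro ⟨h, hh⟩
    rcases eq_or_ne (polyOf c) 0 with h0 | h0
    · refine ⟨0, ?_⟩
      have hc : c = 0 := polyOf_inj (h0.trans polyOf_zero.symm)
      rw [hc]
      funext j
      simp [enc, polyOf_zero]
    · have hG0 : ((X - C a) ^ t) ≠ 0 := pow_ne_zero _ (X_sub_C_ne_zero a)
      have hne : h ≠ 0 := by
        rintro rfl
        rw [mul_zero] at hh
        exact h0 hh
      have hdeg : h.natDegree < n - t := by
        have h1 : (polyOf c).natDegree < n :=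
          (natDegree_lt_iff_degree_lt h0).mpr (degree_polyOf_lt c)
        rw [hh, natDegree_mul hG0 hne] at h1
        have h2 : ((X - C a) ^ t).natDegree = t := by simp [natDegree_pow]
        omega
      have hdeg' : h.degree < ((n - t : ℕ) : WithBot ℕ) :=
        (natDegree_lt_iff_degree_lt hne).mp hdeg
      refine ⟨fun j => h.coeff (j : ℕ), ?_⟩
      funext j
      show ((X - C a) ^ t * polyOf (fun j : Fin (n - t) => h.coeff (j : ℕ))).coeff (j : ℕ) = c j
      rw [polyOf_coeff h hdeg', ← hh, coeff_polyOf, dif_pos j.isLt]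
  · rintro ⟨h, rfl⟩
    rw [polyOf_enc ht]
    exact Dvd.intro _ rfl

end Aux

/-- For odd prime `p` and `2 ≤ t ≤ p − 1`, the code `C_t(1, p, λ₀)` has length `p`,
dimension `p − t`, minimum distance `t + 1` and minimum locality `p − t`; in particular it is
an MDS code (`d = n − k + 1`) and an optimal LRC. -/


theorem stmt7 {p m : ℕ} (hp : p.Prime) (hp2 : p ≠ 2) (hm : 1 ≤ m)
    {F : Type} [Field F] [Fintype F] [DecidableEq F] (hcard : Fintype.card F = p ^ m)
    (t : ℕ) (ht2 : 2 ≤ t) (htp : t ≤ p - 1) (lam0 : F) (hlam0 : lam0 ≠ 0) :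
    Nat.card (Ci p 1 1 t lam0) = (p ^ m) ^ (p - t) ∧
    minDistIs (Ci p 1 1 t lam0) (t + 1) ∧
    minLocalityIs (Ci p 1 1 t lam0) (p - t) ∧
    (t + 1 : ℤ) = (p : ℤ) - ((p - t : ℕ) : ℤ) + 1 ∧
    (t + 1 : ℤ) = (p : ℤ) - ((p - t : ℕ) : ℤ) - (nceil (p - t) (p - t) : ℤ) + 2 := by
  -- basic setup
  have hfact : Fact p.Prime := ⟨hp⟩
  have hchar : CharP F p := by
    have hq : (ringChar F).Prime := CharP.char_is_prime F _
    have : Fact (ringChar F).Prime := ⟨hq⟩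
    obtain ⟨nn, -, hnn⟩ := FiniteField.card F (ringChar F)
    have hdvd : p ∣ ringChar F ^ (nn : ℕ) := by
      rw [← hnn, hcard]; exact dvd_pow_self p (by omega)
    have : p = ringChar F :=
      (Nat.prime_dvd_prime_iff_eq hp hq).mp (hp.dvd_of_dvd_pow hdvd)
    rw [this]; exact ringChar.charP F
  have hp3 : 3 ≤ p := by
    have := hp.two_le
    rcases Nat.lt_or_ge p 3 with h | h
    · interval_cases p <;> simp_all
    · exact h
  set n := 1 * p ^ 1 with hn'
  have hn : n = p := by rw [hn']; ring
  have htn : t < n := by omega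
  set k := p - t with hk'
  have hk1 : 1 ≤ k := by omega
  have hknt : n - t = k := by omega
  -- generator facts
  have hgen : ((X : F[X]) ^ 1 - C lam0) ^ t = (X - C lam0) ^ t := by rw [pow_one]
  have hdvdgen : ((X : F[X]) ^ 1 - C lam0) ^ t ∣ (X : F[X]) ^ n - C (lam0 ^ p ^ 1) := by
    have hXp : (X : F[X]) ^ n - C (lam0 ^ p ^ 1) = (X - C lam0) ^ p := by
      rw [hn, pow_one, sub_pow_char, C_pow]
    rw [hXp, hgen]
    exact pow_dvd_pow _ (by omega)
  have hmem : ∀ c : Fin n → F, c ∈ Ci p 1 1 t lam0 ↔ (X - C lam0) ^ t ∣ polyOf c := by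
    intro c
    have h0 : c ∈ Ci p 1 1 t lam0 ↔
        c ∈ codeOfGen n (lam0 ^ p ^ 1) (((X : F[X]) ^ 1 - C lam0) ^ t) := Iff.rfl
    rw [h0, mem_codeOfGen_iff _ _ hdvdgen, hgen]
  -- weight lemma specialization
  have hwt : ∀ c ∈ Ci p 1 1 t lam0, hammingNorm c ≤ t → c = 0 := by
    intro c hc hw
    exact key_weight (p := p) (by omega) lam0 hlam0 c ((hmem c).mp hc) hw
  -- closure properties
  have hsubmem : ∀ c c' : Fin n → F, c ∈ Ci p 1 1 t lam0 → c' ∈ Ci p 1 1 t lam0 →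
      c - c' ∈ Ci p 1 1 t lam0 := by
    intro c c' h1 h2
    rw [hmem, polyOf_sub]
    exact dvd_sub ((hmem c).mp h1) ((hmem c').mp h2)
  have h0mem : (0 : Fin n → F) ∈ Ci p 1 1 t lam0 := by
    rw [hmem, polyOf_zero]
    exact dvd_zero _
  -- zero-of-vanishing
  have hzero_of_vanish : ∀ c ∈ Ci p 1 1 t lam0, ∀ T : Finset (Fin n), k ≤ T.card →
      (∀ j ∈ T, c j = 0) → c = 0 := by
    intro c hc T hT hv
    apply hwt c hc
    have hss : Finset.univ.filter (fun i => c i ≠ 0) ⊆ Finset.univ \ T := by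
      intro i hi
      rw [Finset.mem_sdiff]
      refine ⟨Finset.mem_univ i, fun hiT => ?_⟩
      exact (Finset.mem_filter.mp hi).2 (hv i hiT)
    have h1 : hammingNorm c ≤ (Finset.univ \ T).card := Finset.card_le_card hss
    have h2 : (Finset.univ \ T).card = n - T.card := by
      rw [Finset.card_sdiff_of_subset (Finset.subset_univ T), Finset.card_univ, Fintype.card_fin]
    omega
  -- existence of nonzero codewords vanishing on small sets
  have hvanish : ∀ J : Finset (Fin n), J.card < k →
      ∃ c ∈ Ci p 1 1 t lam0, c ≠ 0 ∧ ∀ j ∈ J, c j = 0 := by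
    intro J hJ
    have hcard2 : Fintype.card ({x // x ∈ J} → F) < Fintype.card (Fin (n - t) → F) := by
      rw [Fintype.card_fun, Fintype.card_fun, Fintype.card_fin, Fintype.card_coe]
      exact Nat.pow_lt_pow_right Fintype.one_lt_card (by omega)
    obtain ⟨h1, h2, hne, hφ⟩ := Fintype.exists_ne_map_eq_of_card_lt
      (fun (h : Fin (n - t) → F) (j : {x // x ∈ J}) => enc t lam0 h j.1) hcard2
    refine ⟨enc t lam0 (h1 - h2),
      (hmem _).mpr ((dvd_iff_enc htn lam0 _).mpr ⟨_, rfl⟩), ?_, ?_⟩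
    · intro h0
      apply hne
      apply enc_inj htn lam0
      rw [enc_sub] at h0
      exact sub_eq_zero.mp h0
    · intro j hj
      rw [enc_sub]
      have := congrFun hφ ⟨j, hj⟩
      simp only at this
      simp [Pi.sub_apply, this]
  -- cardinality
  have hcardC : Nat.card (Ci p 1 1 t lam0) = (p ^ m) ^ (p - t) := by
    have hbij : Function.Bijective
        (fun h : Fin (n - t) → F =>
          (⟨enc t lam0 h, (hmem _).mpr ((dvd_iff_enc htn lam0 _).mpr ⟨h, rfl⟩)⟩ :
            Ci p 1 1 t lam0)) := by
      constructor
      · intro h1 h2 he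
        exact enc_inj htn lam0 (congrArg Subtype.val he)
      · rintro ⟨c, hc⟩
        obtain ⟨h, hh⟩ := (dvd_iff_enc htn lam0 c).mp ((hmem c).mp hc)
        exact ⟨h, Subtype.ext hh⟩
    have := Nat.card_eq_of_bijective _ hbij
    rw [← this, Nat.card_eq_fintype_card, Fintype.card_fun, Fintype.card_fin, hcard, hknt]
  refine ⟨hcardC, ?_, ?_, ?_, ?_⟩
  -- min distance
  · constructor
    · -- the codeword (X - C lam0)^t has weight t + 1
      have hG0 : ((X - C lam0) ^ t : F[X]) ≠ 0 := pow_ne_zero _ (X_sub_C_ne_zero lam0)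
      have hGdeg : ((X - C lam0) ^ t : F[X]).degree < (n : WithBot ℕ) := by
        rw [← natDegree_lt_iff_degree_lt hG0]
        simp only [natDegree_pow, natDegree_X_sub_C]
        omega
      have hcs : polyOf (fun j : Fin n => ((X - C lam0) ^ t).coeff (j : ℕ))
          = (X - C lam0) ^ t := polyOf_coeff _ hGdeg
      have hcoeff : ∀ j : ℕ, ((X - C lam0) ^ t).coeff j
          = (-lam0) ^ (t - j) * (t.choose j : F) := by
        intro j
        have hxc : (X - C lam0 : F[X]) = X + C (-lam0) := by rw [C_neg, sub_eq_add_neg]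
        rw [hxc, coeff_X_add_C_pow]
      have hchoose : ∀ j, j ≤ t → ((t.choose j : ℕ) : F) ≠ 0 := by
        intro j hj h0
        rw [CharP.cast_eq_zero_iff F p] at h0
        have hd : t.choose j ∣ t.factorial :=
          ⟨j.factorial * (t - j).factorial, by
            rw [← Nat.choose_mul_factorial_mul_factorial hj]; ring⟩
        have hpt := (Nat.Prime.dvd_factorial hp).mp (h0.trans hd)
        omega
      have hne' : ∀ j : Fin n, (((X - C lam0) ^ t).coeff (j : ℕ) ≠ 0) ↔ (j : ℕ) ≤ t := by
        intro j
        rw [hcoeff]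
        constructor
        · intro h
          by_contra hgt
          push_neg at hgt
          rw [Nat.choose_eq_zero_of_lt hgt] at h
          simp at h
        · intro hj
          exact mul_ne_zero (pow_ne_zero _ (neg_ne_zero.mpr hlam0)) (hchoose _ hj)
      refine ⟨fun j : Fin n => ((X - C lam0) ^ t).coeff (j : ℕ), ?_, ?_, ?_⟩
      · rw [hmem, hcs]
      · intro h0
        exact hG0 (by rw [← hcs, h0, polyOf_zero])
      · have hfilt : Finset.univ.filter
            (fun j : Fin n => ((X - C lam0) ^ t).coeff (j : ℕ) ≠ 0)
            = Finset.univ.image (Fin.castLE (show t + 1 ≤ n by omega)) := by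
          ext j
          simp only [Finset.mem_filter, Finset.mem_univ, true_and, Finset.mem_image]
          rw [hne' j]
          constructor
          · intro hj
            exact ⟨⟨(j : ℕ), by omega⟩, by
              apply Fin.ext
              simp [Fin.castLE]⟩
          · rintro ⟨x, rfl⟩
            simpa using Nat.lt_succ_iff.mp x.isLt
        have hcard1 : (Finset.univ.filter
            (fun j : Fin n => ((X - C lam0) ^ t).coeff (j : ℕ) ≠ 0)).card = t + 1 := by
          rw [hfilt, Finset.card_image_of_injective _ (Fin.castLE_injective _),
            Finset.card_univ, Fintype.card_fin]
        simpa [hammingNorm] using hcard1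
    · rintro w ⟨c, hc, hcne, rfl⟩
      by_contra hlt
      exact hcne (hwt c hc (by omega))
  -- min locality
  · constructor
    · -- locality k
      intro i
      have herase : k ≤ (Finset.univ.erase i).card := by
        rw [Finset.card_erase_of_mem (Finset.mem_univ i), Finset.card_univ, Fintype.card_fin]
        omega
      obtain ⟨I, hIsub, hIcard⟩ := Finset.exists_subset_card_eq herase
      refine ⟨I, fun hi => (Finset.mem_erase.mp (hIsub hi)).1 rfl, le_of_eq hIcard, ?_⟩
      classical
      refine ⟨fun y => if h : ∃ c', c' ∈ Ci p 1 1 t lam0 ∧ ∀ j : {x // x ∈ I}, c' j.1 = y j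
        then h.choose i else 0, ?_⟩
      intro c hc
      have hex : ∃ c', c' ∈ Ci p 1 1 t lam0 ∧
          ∀ j : {x // x ∈ I}, c' j.1 = (fun j : {x // x ∈ I} => c j.1) j :=
        ⟨c, hc, fun j => rfl⟩
      beta_reduce
      rw [dif_pos hex]
      obtain ⟨hc', hres⟩ := hex.choose_spec
      have hzz : c - hex.choose = 0 := by
        apply hzero_of_vanish _ (hsubmem c _ hc hc') I (le_of_eq hIcard.symm)
        intro j hj
        show c j - _ = 0
        exact sub_eq_zero.mpr (hres ⟨j, hj⟩).symm
      have hci := congrFun hzz i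
      simp only [Pi.sub_apply, Pi.zero_apply] at hci
      exact sub_eq_zero.mp hci
    · -- minimality
      intro r hr
      by_contra hlt
      push_neg at hlt
      have hnpos : 0 < n := by omega
      set i : Fin n := ⟨0, hnpos⟩ with hi'
      obtain ⟨I, hiI, hIr, f, hf⟩ := hr i
      have hIsub : I ⊆ Finset.univ.erase i :=
        fun x hx => Finset.mem_erase.mpr ⟨fun h => hiI (h ▸ hx), Finset.mem_univ x⟩
      have herase : k - 1 ≤ (Finset.univ.erase i).card := by
        rw [Finset.card_erase_of_mem (Finset.mem_univ i), Finset.card_univ, Fintype.card_fin]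
        omega
      obtain ⟨J, hIJ, hJsub, hJcard⟩ :=
        Finset.exists_subsuperset_card_eq hIsub (by omega : I.card ≤ k - 1) herase
      obtain ⟨c, hc, hcne, hcJ⟩ := hvanish J (by omega)
      have hf0 : f (fun j => (0 : Fin n → F) j.1) = 0 := (hf 0 h0mem).symm
      have hci : c i = 0 := by
        rw [hf c hc]
        have heqf : (fun j : {x // x ∈ I} => c j.1) = (fun j => (0 : Fin n → F) j.1) := by
          funext j
          exact hcJ j.1 (hIJ j.2)
        rw [heqf, hf0]
      apply hcne
      apply hzero_of_vanish c hc (insert i J)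
      · have hiJ : i ∉ J := fun h => (Finset.mem_erase.mp (hJsub h)).1 rfl
        rw [Finset.card_insert_of_notMem hiJ, hJcard]
        omega
      · intro j hj
        rcases Finset.mem_insert.mp hj with rfl | hj
        · exact hci
        · exact hcJ j hj
  -- arithmetic
  · have : ((p - t : ℕ) : ℤ) = (p : ℤ) - t := by
      have : t ≤ p := by omega
      push_cast [this]
      ring
    rw [this]; ring
  · have h1 : ((p - t : ℕ) : ℤ) = (p : ℤ) - t := by
      have : t ≤ p := by omega
      push_cast [this]
      ring
    have h2 : nceil (p - t) (p - t) = 1 := by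
      rw [nceil]
      apply Nat.div_eq_of_lt_le <;> omega
    rw [h1, h2]
    push_cast
    ring
end

section
/- Let p be an odd prime, m ≥ 1, s ≥ 2, 0 ≤ k ≤ s − 1, and let λ_0 = δ^2 be a nonzero square in F_{p^m}. Then the code C_{0,p^{s−k−1}}(2p^s, λ_0) is a linear code over F_{p^m} of length 2p^s, dimension 2p^s − p^{s−k−1}, minimum distance 2, and minimum locality 2p^{k+1} − 1; in particular it is an optimal LRC, i.e., 2 = 2p^s − (2p^s − p^{s−k−1}) − ⌈(2p^s − p^{s−k−1})/(2p^{k+1} − 1)⌉ + 2. -/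
open Polynomial

variable {F : Type} [Field F] [Fintype F] [DecidableEq F]

-- ===== auxiliary development =====

namespace Stmt11Aux

variable {F : Type} [Field F] [Fintype F] [DecidableEq F]

noncomputable def pf (n : ℕ) (c : Fin n → F) : F[X] := ∑ j : Fin n, C (c j) * X ^ (j : ℕ)

lemma pf_coeff (n : ℕ) (c : Fin n → F) (e : ℕ) :
    (pf n c).coeff e = if h : e < n then c ⟨e, h⟩ else 0 := by
  rw [pf, finset_sum_coeff]
  by_cases h : e < n
  · rw [dif_pos h, Finset.sum_eq_single (⟨e, h⟩ : Fin n)]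
    · simp
    · intro b _ hb
      have : e ≠ (b : ℕ) := fun he => hb (Fin.ext he.symm)
      simp [coeff_X_pow, this]
    · intro h'; exact absurd (Finset.mem_univ _) h'
  · rw [dif_neg h]
    apply Finset.sum_eq_zero
    intro b _
    have : e ≠ (b : ℕ) := by
      have := b.isLt; omega
    simp [coeff_X_pow, this]

lemma pf_degree_lt (n : ℕ) (hn : 0 < n) (c : Fin n → F) : (pf n c).degree < n := by
  rw [degree_lt_iff_coeff_zero]
  intro e he
  rw [pf_coeff, dif_neg]
  exact fun h => absurd he (by exact_mod_cast not_le.mpr h)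

lemma pf_poly (n : ℕ) (q : F[X]) (hq : q.degree < n) :
    pf n (fun i : Fin n => q.coeff i) = q := by
  ext e
  rw [pf_coeff]
  split
  · rfl
  · next h =>
    exact (coeff_eq_zero_of_degree_lt (lt_of_lt_of_le hq (by exact_mod_cast le_of_not_gt h))).symm

lemma pf_zero (n : ℕ) : pf n (0 : Fin n → F) = 0 := by
  simp [pf]

lemma mem_codeOfGen_iff {n : ℕ} {lam : F} {g : F[X]} (hdvd : g ∣ X ^ n - C lam)
    (c : Fin n → F) : c ∈ codeOfGen n lam g ↔ g ∣ pf n c := by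
  have hsp : Ideal.span ({g, X ^ n - C lam} : Set F[X]) = Ideal.span {g} := by
    rw [Ideal.span_insert, sup_eq_left]
    exact Ideal.span_singleton_le_span_singleton.mpr hdvd
  show (∑ j : Fin n, C (c j) * X ^ (j : ℕ)) ∈ Ideal.span {g, X ^ n - C lam} ↔ _
  rw [hsp, Ideal.mem_span_singleton]
  rfl

section Core

variable (n j P : ℕ) (z lam : F)

-- the generator
local notation "G" => (X ^ j - C z : F[X])

lemma G_ne_zero (hj : 0 < j) : (X ^ j - C z : F[X]) ≠ 0 :=
  X_pow_sub_C_ne_zero hj z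

lemma G_natDegree : (X ^ j - C z : F[X]).natDegree = j := natDegree_X_pow_sub_C

lemma card_code (hj : 0 < j) (hP : 0 < P) (hn : n = j * (2 * P))
    (hdvd : (X ^ j - C z : F[X]) ∣ X ^ n - C lam) :
    Nat.card (codeOfGen n lam (X ^ j - C z)) = Fintype.card F ^ (n - j) := by
  have hjn : j < n := by
    have h2 : j * 2 ≤ j * (2 * P) := Nat.mul_le_mul_left _ (by omega)
    omega
  have hn0 : 0 < n := by omega
  have hGne := G_ne_zero j z hj
  have hdegG : (X ^ j - C z : F[X]).degree = j := degree_X_pow_sub_C hj z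
  set Φ : (Fin (n - j) → F) → (Fin n → F) :=
    fun u e => (pf (n - j) u * (X ^ j - C z)).coeff e with hΦ
  have hdegprod : ∀ u : Fin (n - j) → F, (pf (n - j) u * (X ^ j - C z)).degree < (n : WithBot ℕ) := by
    intro u
    rcases eq_or_ne (pf (n - j) u) 0 with h0 | hne
    · rw [h0, zero_mul, degree_zero]
      exact WithBot.bot_lt_coe n
    · rw [degree_mul, hdegG, degree_eq_natDegree hne]
      have h1 : (pf (n - j) u).natDegree < n - j := by
        have := pf_degree_lt (n - j) (by omega) u
        rw [degree_eq_natDegree hne] at this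
        exact_mod_cast this
      have : ((pf (n - j) u).natDegree + j : ℕ) < n := by omega
      exact_mod_cast this
  have hpfΦ : ∀ u, pf n (Φ u) = pf (n - j) u * (X ^ j - C z) := by
    intro u
    exact pf_poly n _ (hdegprod u)
  have hmem : ∀ u, Φ u ∈ codeOfGen n lam (X ^ j - C z) := by
    intro u
    rw [mem_codeOfGen_iff hdvd, hpfΦ]
    exact Dvd.intro_left _ rfl
  set Φ' : (Fin (n - j) → F) → (codeOfGen n lam (X ^ j - C z)) :=
    fun u => ⟨Φ u, hmem u⟩ with hΦ'
  have hbij : Function.Bijective Φ' := by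
    constructor
    · intro u u' huu
      have h1 : pf n (Φ u) = pf n (Φ u') := by
        rw [Subtype.ext_iff] at huu
        simp only [Φ'] at huu
        rw [huu]
      rw [hpfΦ, hpfΦ] at h1
      have h2 : pf (n - j) u = pf (n - j) u' := mul_right_cancel₀ hGne h1
      funext i
      have := congrArg (fun q => Polynomial.coeff q (i : ℕ)) h2
      simpa [pf_coeff, i.isLt] using this
    · rintro ⟨c, hc⟩
      rw [mem_codeOfGen_iff hdvd] at hc
      obtain ⟨u', hu'⟩ := hc
      have hdc : (pf n c).degree < n := pf_degree_lt n hn0 c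
      have hdu' : u'.degree < ((n - j : ℕ) : WithBot ℕ) := by
        rcases eq_or_ne u' 0 with rfl | hne
        · rw [degree_zero]; exact WithBot.bot_lt_coe _
        · have hpfne : pf n c ≠ 0 := by
            rw [hu']; exact mul_ne_zero hGne hne
          have h1 : (pf n c).natDegree < n := by
            rw [← natDegree_lt_iff_degree_lt hpfne] at hdc; exact hdc
          have h2 : (pf n c).natDegree = j + u'.natDegree := by
            rw [hu', natDegree_mul hGne hne, G_natDegree]
          rw [degree_eq_natDegree hne]
          exact_mod_cast by omega
      refine ⟨fun i => u'.coeff i, ?_⟩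
      apply Subtype.ext
      simp only [Φ']
      funext e
      have hpfu : pf (n - j) (fun i : Fin (n - j) => u'.coeff i) = u' := pf_poly _ _ hdu'
      show (pf (n - j) _ * (X ^ j - C z)).coeff (e : ℕ) = c e
      rw [hpfu, mul_comm, ← hu', pf_coeff, dif_pos e.isLt]
  calc Nat.card (codeOfGen n lam (X ^ j - C z))
      = Nat.card (Fin (n - j) → F) := (Nat.card_congr (Equiv.ofBijective Φ' hbij)).symm
    _ = Fintype.card F ^ (n - j) := by
        rw [Nat.card_eq_fintype_card, Fintype.card_fun, Fintype.card_fin]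

-- the weight-two codeword
def cw (n j : ℕ) (z : F) (a : ℕ) : Fin n → F :=
  fun e => (if (e : ℕ) = j * a then 1 else 0) + (if (e : ℕ) = 0 then -z ^ a else 0)

lemma pf_cw (hn0 : 0 < n) (a : ℕ) (hja : j * a < n) :
    pf n (cw n j z a) = X ^ (j * a) - C (z ^ a) := by
  ext e
  rw [pf_coeff, coeff_sub, coeff_X_pow, coeff_C]
  by_cases h : e < n
  · rw [dif_pos h]
    simp only [cw]
    rcases eq_or_ne e (j*a) with h1 | h1 <;> rcases eq_or_ne e 0 with h2 | h2 <;>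
      simp [h1, h2, sub_eq_add_neg, apply_ite (fun x : F => -x)]
  · rw [dif_neg h]
    have h1 : e ≠ j * a := by omega
    have h2 : e ≠ 0 := by omega
    simp [h1, h2]

lemma cw_mem (hn0 : 0 < n) (a : ℕ) (hja : j * a < n)
    (hdvd : (X ^ j - C z : F[X]) ∣ X ^ n - C lam) :
    cw n j z a ∈ codeOfGen n lam (X ^ j - C z) := by
  rw [mem_codeOfGen_iff hdvd]
  show (X ^ j - C z : F[X]) ∣ pf n (cw n j z a)
  rw [pf_cw n j z hn0 a hja, pow_mul, map_pow]
  exact sub_dvd_pow_sub_pow _ _ a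

lemma zero_mem (hdvd : (X ^ j - C z : F[X]) ∣ X ^ n - C lam) :
    (0 : Fin n → F) ∈ codeOfGen n lam (X ^ j - C z) := by
  rw [mem_codeOfGen_iff hdvd]
  show (X ^ j - C z : F[X]) ∣ pf n 0
  rw [pf_zero]
  exact dvd_zero _

lemma cw_val_zero (hn0 : 0 < n) (hz : z ≠ 0) (a : ℕ) (ha : 0 < a) (hj : 0 < j) :
    cw n j z a ⟨0, hn0⟩ = -z ^ a := by
  have h1 : (0 : ℕ) ≠ j * a := by
    have : 0 < j * a := Nat.mul_pos hj ha
    omega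
  show (if (0:ℕ) = j * a then (1:F) else 0) + (if (0:ℕ) = 0 then -z ^ a else 0) = -z ^ a
  rw [if_neg h1, if_pos rfl, zero_add]

lemma cw_val_other (hz : z ≠ 0) (e : Fin n) (h1 : (e : ℕ) ≠ j * a) (h2 : (e : ℕ) ≠ 0) :
    cw n j z a e = 0 := by
  simp [cw, h1, h2]

lemma cw_ne_zero (hn0 : 0 < n) (hz : z ≠ 0) (a : ℕ) (ha : 0 < a) (hj : 0 < j) :
    cw n j z a ≠ 0 := by
  intro h
  have := congrFun h ⟨0, hn0⟩
  rw [cw_val_zero n j z hn0 hz a ha hj] at this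
  exact (neg_ne_zero.mpr (pow_ne_zero a hz)) (by simpa using this)

lemma cw_norm (hn0 : 0 < n) (hz : z ≠ 0) (a : ℕ) (ha : 0 < a) (hj : 0 < j) (hja : j * a < n) :
    hammingNorm (cw n j z a) = 2 := by
  have hja0 : j * a ≠ 0 := by positivity
  have key : ({i | cw n j z a i ≠ 0} : Finset (Fin n)) =
      {(⟨j * a, hja⟩ : Fin n), ⟨0, hn0⟩} := by
    ext e
    simp only [Finset.mem_filter, Finset.mem_univ, true_and, Finset.mem_insert,
      Finset.mem_singleton]
    constructor
    · intro he
      by_contra hcon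
      push_neg at hcon
      obtain ⟨he1, he2⟩ := hcon
      apply he
      apply cw_val_other n j z hz e
      · intro h; exact he1 (Fin.ext h)
      · intro h; exact he2 (Fin.ext h)
    · rintro (rfl | rfl)
      · show ¬ ((if (j*a:ℕ) = j * a then (1:F) else 0) + (if (j*a:ℕ) = 0 then -z ^ a else 0)) = 0
        rw [if_pos rfl, if_neg hja0]
        simp
      · rw [cw_val_zero n j z hn0 hz a ha hj]
        exact neg_ne_zero.mpr (pow_ne_zero a hz)
  rw [hammingNorm, key]
  rw [Finset.card_insert_of_notMem, Finset.card_singleton]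
  simp [Fin.ext_iff, hja0]

-- the parity check
lemma check (hj : 0 < j) (hP : 0 < P) (hn : n = j * (2 * P))
    (hdvd : (X ^ j - C z : F[X]) ∣ X ^ n - C lam)
    (c : Fin n → F) (hc : c ∈ codeOfGen n lam (X ^ j - C z))
    (i : ℕ) (hi : i < j) :
    ∑ r ∈ Finset.range (2 * P), z ^ r * (pf n c).coeff (i + j * r) = 0 := by
  have hGne := G_ne_zero j z hj
  have hn0 : 0 < n := by
    have h2 : j * 2 ≤ j * (2 * P) := Nat.mul_le_mul_left _ (by omega)
    omega
  rw [mem_codeOfGen_iff hdvd] at hc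
  obtain ⟨u, hu⟩ := hc
  have hu' : pf n c = u * (X ^ j - C z) := by rw [hu, mul_comm]
  have hub : ∀ e : ℕ, n - j ≤ e → u.coeff e = 0 := by
    intro e he
    rcases eq_or_ne u 0 with rfl | hune
    · simp
    · apply coeff_eq_zero_of_natDegree_lt
      have hpfne : pf n c ≠ 0 := by rw [hu']; exact mul_ne_zero hune hGne
      have h1 : (pf n c).natDegree < n := by
        rw [natDegree_lt_iff_degree_lt hpfne]
        exact_mod_cast pf_degree_lt n hn0 c
      have h2 : (pf n c).natDegree = u.natDegree + j := by
        rw [hu', natDegree_mul hune hGne, G_natDegree]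
      omega
  have hco : ∀ r : ℕ, (pf n c).coeff (i + j * r) =
      (if r = 0 then 0 else u.coeff (i + j * (r - 1))) - z * u.coeff (i + j * r) := by
    intro r
    have hexp : u * (X ^ j - C z) = u * X ^ j - C z * u := by ring
    rw [hu', hexp, coeff_sub, coeff_mul_X_pow', coeff_C_mul]
    rcases Nat.eq_zero_or_pos r with rfl | hr
    · rw [if_pos rfl, if_neg (by simp; omega)]
    · obtain ⟨r', rfl⟩ : ∃ r', r = r' + 1 := ⟨r - 1, by omega⟩
      have hmul : j * (r' + 1) = j * r' + j := by ring
      have hmul2 : j * (r' + 1 - 1) = j * r' := by norm_num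
      rw [if_pos (by omega), if_neg (by omega)]
      congr 2
      omega
  set Q := 2 * P - 1 with hQ
  have h2PQ : 2 * P = Q + 1 := by omega
  have hAQ : u.coeff (i + j * Q) = 0 := by
    apply hub
    have : n - j = j * Q := by
      have : j * (2 * P) = j * Q + j := by rw [h2PQ]; ring
      omega
    omega
  calc ∑ r ∈ Finset.range (2 * P), z ^ r * (pf n c).coeff (i + j * r)
      = ∑ r ∈ Finset.range (Q + 1),
          (z ^ r * (if r = 0 then 0 else u.coeff (i + j * (r - 1)))
            - z ^ r * (z * u.coeff (i + j * r))) := by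
        rw [h2PQ]
        apply Finset.sum_congr rfl
        intro r _
        rw [hco r, mul_sub]
    _ = (∑ r ∈ Finset.range (Q + 1), z ^ r * (if r = 0 then 0 else u.coeff (i + j * (r - 1))))
        - ∑ r ∈ Finset.range (Q + 1), z ^ r * (z * u.coeff (i + j * r)) := by
        rw [Finset.sum_sub_distrib]
    _ = 0 := by
        rw [Finset.sum_range_succ' (fun r => z ^ r * (if r = 0 then 0 else u.coeff (i + j * (r - 1))))]
        rw [Finset.sum_range_succ (fun r => z ^ r * (z * u.coeff (i + j * r)))]
        rw [hAQ]
        simp only [if_pos rfl, mul_zero, add_zero, Nat.add_sub_cancel,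
          if_neg (Nat.succ_ne_zero _), if_true]
        rw [sub_eq_zero]
        apply Finset.sum_congr rfl
        intro r _
        ring

lemma locality_up (hj : 0 < j) (hP : 0 < P) (hn : n = j * (2 * P)) (hz : z ≠ 0)
    (hdvd : (X ^ j - C z : F[X]) ∣ X ^ n - C lam) :
    hasAllSymbolLocality (codeOfGen n lam (X ^ j - C z)) (2 * P - 1) := by
  have hn0 : 0 < n := by
    have h2 : j * 2 ≤ j * (2 * P) := Nat.mul_le_mul_left _ (by omega)
    omega
  intro e
  have hi : (e : ℕ) % j < j := Nat.mod_lt _ hj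
  have hre : (e : ℕ) / j < 2 * P := by
    rw [Nat.div_lt_iff_lt_mul hj]
    have h1 := e.isLt
    have h2 : j * (2 * P) = 2 * P * j := by ring
    omega
  set i := (e : ℕ) % j with hidef
  set re := (e : ℕ) / j with hredef
  have he : i + j * re = (e : ℕ) := Nat.mod_add_div _ _
  have hlt : ∀ r, r < 2 * P → i + j * r < n := by
    intro r hr
    have h1 : j * (r + 1) ≤ j * (2 * P) := Nat.mul_le_mul_left _ (by omega)
    have h2 : j * (r + 1) = j * r + j := by ring
    omega
  set ι : ℕ → Fin n := fun r => ⟨(i + j * r) % n, Nat.mod_lt _ hn0⟩ with hιdef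
  have hιval : ∀ r, r < 2 * P → ((ι r : Fin n) : ℕ) = i + j * r := by
    intro r hr
    exact Nat.mod_eq_of_lt (hlt r hr)
  have hιe : ι re = e := by
    apply Fin.ext
    rw [hιval re hre, he]
  set I : Finset (Fin n) := ((Finset.range (2 * P)).erase re).image ι with hIdef
  have hmemI : ∀ v : Fin n, v ∈ I → ∃ r, r < 2 * P ∧ r ≠ re ∧ v = ι r := by
    intro v hv
    rw [hIdef, Finset.mem_image] at hv
    obtain ⟨r, hr, hvr⟩ := hv
    rw [Finset.mem_erase, Finset.mem_range] at hr
    exact ⟨r, hr.2, hr.1, hvr.symm⟩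
  have heI : e ∉ I := by
    intro hcon
    obtain ⟨r, hr1, hr2, hr3⟩ := hmemI e hcon
    have : (e : ℕ) = i + j * r := by rw [hr3, hιval r hr1]
    have : j * re = j * r := by omega
    exact hr2 (Nat.eq_of_mul_eq_mul_left hj this.symm)
  have hcardI : I.card ≤ 2 * P - 1 := by
    calc I.card ≤ ((Finset.range (2 * P)).erase re).card := Finset.card_image_le
      _ = 2 * P - 1 := by
          rw [Finset.card_erase_of_mem (Finset.mem_range.mpr hre), Finset.card_range]
  refine ⟨I, heI, hcardI, fun x => (z ^ re)⁻¹ * -(∑ v : {v : Fin n // v ∈ I}, z ^ ((v.1 : ℕ) / j) * x v), ?_⟩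
  intro c hc
  have hchk := check n j P z lam hj hP hn hdvd c hc i hi
  have hcoeff : ∀ r, r < 2 * P → (pf n c).coeff (i + j * r) = c (ι r) := by
    intro r hr
    rw [pf_coeff, dif_pos (hlt r hr)]
    congr 1
    apply Fin.ext
    rw [hιval r hr]
  have hinj : ∀ r ∈ (Finset.range (2 * P)).erase re, ∀ r' ∈ (Finset.range (2 * P)).erase re,
      ι r = ι r' → r = r' := by
    intro r hr r' hr' hrr
    rw [Finset.mem_erase, Finset.mem_range] at hr hr'
    have h1 : i + j * r = i + j * r' := by
      rw [← hιval r hr.2, ← hιval r' hr'.2, hrr]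
    exact Nat.eq_of_mul_eq_mul_left hj (by omega)
  have hsum1 : (∑ v : {v : Fin n // v ∈ I}, z ^ ((v.1 : ℕ) / j) * c v.1)
      = ∑ v ∈ I, z ^ ((v : ℕ) / j) * c v := by
    exact Finset.sum_coe_sort I (fun v => z ^ ((v : ℕ) / j) * c v)
  have hsum2 : (∑ v ∈ I, z ^ ((v : ℕ) / j) * c v)
      = ∑ r ∈ (Finset.range (2 * P)).erase re, z ^ r * c (ι r) := by
    rw [hIdef, Finset.sum_image hinj]
    apply Finset.sum_congr rfl
    intro r hr
    rw [Finset.mem_erase, Finset.mem_range] at hr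
    congr 2
    rw [hιval r hr.2, Nat.add_mul_div_left _ _ hj, Nat.div_eq_of_lt hi, zero_add]
  have hsum3 : z ^ re * c e + ∑ r ∈ (Finset.range (2 * P)).erase re, z ^ r * c (ι r) = 0 := by
    rw [← hιe]
    rw [Finset.add_sum_erase _ (fun r => z ^ r * c (ι r)) (Finset.mem_range.mpr hre)]
    rw [← hchk]
    apply Finset.sum_congr rfl
    intro r hr
    rw [hcoeff r (Finset.mem_range.mp hr)]
  have hzre : z ^ re ≠ 0 := pow_ne_zero _ hz
  show c e = (z ^ re)⁻¹ * -(∑ v : {v : Fin n // v ∈ I}, z ^ ((v.1 : ℕ) / j) * c v.1)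
  rw [hsum1, hsum2]
  field_simp
  linear_combination hsum3

lemma locality_low (hj : 0 < j) (hP : 0 < P) (hn : n = j * (2 * P)) (hz : z ≠ 0)
    (hdvd : (X ^ j - C z : F[X]) ∣ X ^ n - C lam)
    (r' : ℕ) (h : hasAllSymbolLocality (codeOfGen n lam (X ^ j - C z)) r') :
    2 * P - 1 ≤ r' := by
  have hn0 : 0 < n := by
    have h2 : j * 2 ≤ j * (2 * P) := Nat.mul_le_mul_left _ (by omega)
    omega
  by_contra hcon
  push_neg at hcon
  obtain ⟨I, h0I, hcard, f, hf⟩ := h ⟨0, hn0⟩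
  have hcard' : I.card ≤ 2 * P - 2 := by omega
  set κ : ℕ → Fin n := fun a => ⟨(j * a) % n, Nat.mod_lt _ hn0⟩ with hκdef
  have hκlt : ∀ a, a ≤ 2 * P - 1 → j * a < n := by
    intro a ha
    have h1 : j * a < j * (2 * P) := (Nat.mul_lt_mul_left hj).mpr (by omega)
    omega
  have hκval : ∀ a, a ≤ 2 * P - 1 → ((κ a : Fin n) : ℕ) = j * a := by
    intro a ha
    exact Nat.mod_eq_of_lt (hκlt a ha)
  have hex : ∃ a, a ∈ Finset.Icc 1 (2 * P - 1) ∧ κ a ∉ I := by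
    by_contra hall
    push_neg at hall
    have hsub : (Finset.Icc 1 (2 * P - 1)).image κ ⊆ I := by
      intro v hv
      rw [Finset.mem_image] at hv
      obtain ⟨a, ha, rfl⟩ := hv
      exact hall a ha
    have hinj2 : Set.InjOn κ ↑(Finset.Icc 1 (2 * P - 1)) := by
      intro a ha b hb hab
      rw [Finset.coe_Icc, Set.mem_Icc] at ha hb
      have : j * a = j * b := by rw [← hκval a ha.2, ← hκval b hb.2, hab]
      exact Nat.eq_of_mul_eq_mul_left hj this
    have hcard2 : 2 * P - 1 ≤ I.card := by
      calc 2 * P - 1 = (Finset.Icc 1 (2 * P - 1)).card := by rw [Nat.card_Icc]; omega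
        _ = ((Finset.Icc 1 (2 * P - 1)).image κ).card :=
            (Finset.card_image_of_injOn hinj2).symm
        _ ≤ I.card := Finset.card_le_card hsub
    omega
  obtain ⟨a, haIcc, haI⟩ := hex
  rw [Finset.mem_Icc] at haIcc
  have hja : j * a < n := hκlt a haIcc.2
  have ha0 : 0 < a := haIcc.1
  have hcmem := cw_mem n j z lam hn0 a hja hdvd
  have h0mem := zero_mem n j z lam hdvd
  have hagree : (fun w : {v : Fin n // v ∈ I} => cw n j z a w.1)
      = (fun w : {v : Fin n // v ∈ I} => (0 : Fin n → F) w.1) := by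
    funext w
    show cw n j z a w.1 = 0
    apply cw_val_other n j z hz w.1
    · intro hw
      apply haI
      have : w.1 = κ a := by
        apply Fin.ext
        rw [hκval a haIcc.2, hw]
      rw [← this]
      exact w.2
    · intro hw
      apply h0I
      have : w.1 = (⟨0, hn0⟩ : Fin n) := Fin.ext hw
      rw [← this]
      exact w.2
  have h1 := hf _ hcmem
  have h2 := hf _ h0mem
  rw [hagree] at h1
  rw [← h2] at h1
  rw [cw_val_zero n j z hn0 hz a ha0 hj] at h1
  exact (neg_ne_zero.mpr (pow_ne_zero a hz)) (by simpa using h1)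

lemma mindist (hj : 0 < j) (hP : 0 < P) (hn : n = j * (2 * P)) (hz : z ≠ 0)
    (hdvd : (X ^ j - C z : F[X]) ∣ X ^ n - C lam) :
    minDistIs (codeOfGen n lam (X ^ j - C z)) 2 := by
  have hjn : j < n := by
    have h2 : j * 2 ≤ j * (2 * P) := Nat.mul_le_mul_left _ (by omega)
    omega
  have hn0 : 0 < n := by omega
  have hGne := G_ne_zero j z hj
  constructor
  · refine ⟨cw n j z 1, cw_mem n j z lam hn0 1 (by omega) hdvd,
      cw_ne_zero n j z hn0 hz 1 one_pos hj, cw_norm n j z hn0 hz 1 one_pos hj (by omega)⟩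
  · rintro w ⟨c, hc, hcne, rfl⟩
    by_contra hlt
    push_neg at hlt
    interval_cases hw : hammingNorm c
    · exact hcne (hammingNorm_eq_zero.mp hw)
    · -- weight one
      obtain ⟨e0, he0⟩ := Finset.card_eq_one.mp hw
      have he0mem : e0 ∈ ({i | c i ≠ 0} : Finset (Fin n)) := by rw [he0]; exact Finset.mem_singleton_self _
      have hce0 : c e0 ≠ 0 := by
        simpa using he0mem
      have hother : ∀ i : Fin n, i ≠ e0 → c i = 0 := by
        intro i hi
        by_contra hci
        have : i ∈ ({i | c i ≠ 0} : Finset (Fin n)) := by simpa using hci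
        rw [he0, Finset.mem_singleton] at this
        exact hi this
      have hpfc : pf n c = C (c e0) * X ^ (e0 : ℕ) := by
        ext e
        rw [pf_coeff, coeff_C_mul, coeff_X_pow]
        by_cases h : e < n
        · rw [dif_pos h]
          rcases eq_or_ne (⟨e, h⟩ : Fin n) e0 with h1 | h1
          · rw [← h1]
            rw [if_pos rfl]
            simp
          · rw [hother _ h1, if_neg, mul_zero]
            intro hcon
            exact h1 (Fin.ext hcon)
        · rw [dif_neg h]
          rw [if_neg, mul_zero]
          intro hcon
          have := e0.isLt
          omega
      rw [mem_codeOfGen_iff hdvd] at hc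
      rw [hpfc] at hc
      obtain ⟨u, hu⟩ := hc
      have hmne : (C (c e0) * X ^ (e0 : ℕ) : F[X]) ≠ 0 := by
        apply mul_ne_zero
        · exact fun hcc => hce0 (by simpa using hcc)
        · exact pow_ne_zero _ X_ne_zero
      have hune : u ≠ 0 := by
        intro hu0
        rw [hu0, mul_zero] at hu
        exact hmne hu
      have hnatdeg : (e0 : ℕ) = j + u.natDegree := by
        have := congrArg natDegree hu
        rwa [natDegree_C_mul_X_pow _ _ hce0, natDegree_mul hGne hune, G_natDegree] at this
      have htrail : (e0 : ℕ) = u.natTrailingDegree := by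
        have h1 : (C (c e0) * X ^ (e0 : ℕ)).natTrailingDegree = (e0 : ℕ) := by
          rw [C_mul_X_pow_eq_monomial, natTrailingDegree_monomial hce0]
        have h2 : (X ^ j - C z : F[X]).natTrailingDegree = 0 := by
          rw [natTrailingDegree_eq_zero]
          right
          rw [coeff_sub, coeff_X_pow, if_neg (by omega), coeff_C_zero, zero_sub]
          exact neg_ne_zero.mpr hz
        have := congrArg natTrailingDegree hu
        rwa [h1, natTrailingDegree_mul hGne hune, h2, zero_add] at this
      have := u.natTrailingDegree_le_natDegree
      omega

end Core

end Stmt11Aux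

namespace Stmt11Aux

lemma nceil_mul (b j : ℕ) (hb : 0 < b) : nceil (j * b) b = j := by
  unfold nceil
  have h1 : j * b + b - 1 = (b - 1) + b * j := by
    rw [mul_comm j b]; omega
  rw [h1, Nat.add_mul_div_left _ _ hb, Nat.div_eq_of_lt (by omega), zero_add]

end Stmt11Aux


/-- For odd prime `p`, `s ≥ 2`, `0 ≤ k ≤ s − 1` and `λ₀ = δ²` a nonzero square,
the code `C_{0,p^{s−k−1}}(2p^s, λ₀)` has length `2p^s`, dimension `2p^s − p^{s−k−1}`, minimum
distance `2` and minimum locality `2p^{k+1} − 1`; in particular it is an optimal LRC. -/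
theorem stmt11 {p m : ℕ} (hp : p.Prime) (hp2 : p ≠ 2) (hm : 1 ≤ m)
    {F : Type} [Field F] [Fintype F] [DecidableEq F] (hcard : Fintype.card F = p ^ m)
    (s : ℕ) (hs : 2 ≤ s) (k : ℕ) (hk : k ≤ s - 1) (δ : F) (hδ : δ ≠ 0) :
    Nat.card (Cij p s 0 (p ^ (s - k - 1)) δ) = (p ^ m) ^ (2 * p ^ s - p ^ (s - k - 1)) ∧
    minDistIs (Cij p s 0 (p ^ (s - k - 1)) δ) 2 ∧
    minLocalityIs (Cij p s 0 (p ^ (s - k - 1)) δ) (2 * p ^ (k + 1) - 1) ∧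
    (2 : ℤ) = ((2 * p ^ s : ℕ) : ℤ) - ((2 * p ^ s - p ^ (s - k - 1) : ℕ) : ℤ)
      - (nceil (2 * p ^ s - p ^ (s - k - 1)) (2 * p ^ (k + 1) - 1) : ℤ) + 2 := by
  haveI : Fact p.Prime := ⟨hp⟩
  haveI hchar : CharP F p := by
    have h1 : CharP F (ringChar F) := ringChar.charP F
    obtain ⟨n', hprime, hcardF⟩ := FiniteField.card F (ringChar F)
    have hdvd : p ∣ ringChar F := by
      have h2 : p ∣ Fintype.card F := by
        rw [hcard]; exact dvd_pow_self p (by omega)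
      rw [hcardF] at h2
      exact hp.dvd_of_dvd_pow h2
    have h3 : p = ringChar F := (Nat.prime_dvd_prime_iff_eq hp hprime).mp hdvd
    rw [h3]; exact h1
  have hts : (s - k - 1) + (k + 1) = s := by omega
  have hn : 2 * p ^ s = p ^ (s - k - 1) * (2 * p ^ (k + 1)) := by
    rw [show p ^ (s - k - 1) * (2 * p ^ (k + 1)) = 2 * (p ^ (s - k - 1) * p ^ (k + 1)) by ring,
      ← pow_add, hts]
  have hj : 0 < p ^ (s - k - 1) := pow_pos hp.pos _
  have hP : 0 < p ^ (k + 1) := pow_pos hp.pos _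
  have hz : (-δ ^ p ^ (s - k - 1) : F) ≠ 0 := neg_ne_zero.mpr (pow_ne_zero _ hδ)
  have hfrob : ((X + C δ) ^ p ^ (s - k - 1) : F[X])
      = X ^ p ^ (s - k - 1) - C (-δ ^ p ^ (s - k - 1)) := by
    rw [add_pow_char_pow, map_neg, sub_neg_eq_add, map_pow]
  have hG : ((X - C δ) ^ 0 * (X + C δ) ^ p ^ (s - k - 1) : F[X])
      = X ^ p ^ (s - k - 1) - C (-δ ^ p ^ (s - k - 1)) := by
    rw [pow_zero, one_mul, hfrob]
  have hCeq : Cij p s 0 (p ^ (s - k - 1)) δ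
      = codeOfGen (2 * p ^ s) ((δ ^ 2) ^ p ^ s)
          (X ^ p ^ (s - k - 1) - C (-δ ^ p ^ (s - k - 1))) := by
    unfold Cij
    rw [hG]
  have hdvd : (X ^ p ^ (s - k - 1) - C (-δ ^ p ^ (s - k - 1)) : F[X])
      ∣ X ^ (2 * p ^ s) - C ((δ ^ 2) ^ p ^ s) := by
    rw [← hfrob]
    have h4 : ((X + C δ) ^ p ^ (s - k - 1) : F[X]) ∣ (X + C δ) ^ p ^ s :=
      pow_dvd_pow _ (Nat.pow_le_pow_right hp.pos (by omega))
    have h5 : ((X + C δ) ^ p ^ s : F[X]) ∣ ((X + C δ) * (X - C δ)) ^ p ^ s := by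
      rw [mul_pow]; exact dvd_mul_right _ _
    have h6 : (((X + C δ) * (X - C δ)) : F[X]) = X ^ 2 - C (δ ^ 2) := by
      rw [map_pow]; ring
    have h7 : ((X ^ 2 - C (δ ^ 2)) ^ p ^ s : F[X]) = X ^ (2 * p ^ s) - C ((δ ^ 2) ^ p ^ s) := by
      rw [sub_pow_char_pow, ← pow_mul]; simp [map_pow]
    rw [h6, h7] at h5
    exact h4.trans h5
  refine ⟨?_, ?_, ?_, ?_⟩
  · rw [hCeq, Stmt11Aux.card_code (2 * p ^ s) (p ^ (s - k - 1)) (p ^ (k + 1))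
      (-δ ^ p ^ (s - k - 1)) ((δ ^ 2) ^ p ^ s) hj hP hn hdvd, hcard]
  · rw [hCeq]
    exact Stmt11Aux.mindist (2 * p ^ s) (p ^ (s - k - 1)) (p ^ (k + 1))
      (-δ ^ p ^ (s - k - 1)) ((δ ^ 2) ^ p ^ s) hj hP hn hz hdvd
  · rw [hCeq]
    constructor
    · exact Stmt11Aux.locality_up (2 * p ^ s) (p ^ (s - k - 1)) (p ^ (k + 1))
        (-δ ^ p ^ (s - k - 1)) ((δ ^ 2) ^ p ^ s) hj hP hn hz hdvd
    · intro r' hr'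
      exact Stmt11Aux.locality_low (2 * p ^ s) (p ^ (s - k - 1)) (p ^ (k + 1))
        (-δ ^ p ^ (s - k - 1)) ((δ ^ 2) ^ p ^ s) hj hP hn hz hdvd r' hr'
  · have hb : 0 < 2 * p ^ (k + 1) - 1 := by omega
    have h1 : p ^ (s - k - 1) * (2 * p ^ (k + 1) - 1) + p ^ (s - k - 1)
        = p ^ (s - k - 1) * (2 * p ^ (k + 1)) := by
      rw [← Nat.mul_succ]
      congr 1
      omega
    have hK : 2 * p ^ s - p ^ (s - k - 1) = p ^ (s - k - 1) * (2 * p ^ (k + 1) - 1) := by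
      omega
    have hle : p ^ (s - k - 1) ≤ 2 * p ^ s := by
      have h2 : p ^ (s - k - 1) * 1 ≤ p ^ (s - k - 1) * (2 * p ^ (k + 1)) :=
        Nat.mul_le_mul_left _ (by omega)
      omega
    rw [hK, Stmt11Aux.nceil_mul _ _ hb]
    omega
end

section
/- Let p be an odd prime, m ≥ 1, s ≥ 2, and let λ_0 = δ^2 be a nonzero square in F_{p^m}. Then the code C_{0,2}(2p^s, λ_0) is a linear code over F_{p^m} of length 2p^s, dimension 2p^s − 2, minimum distance 2, and minimum locality 2p^s − 2p^{s−1} − 1; in particular it is an optimal LRC, i.e., 2 = 2p^s − (2p^s − 2) − ⌈(2p^s − 2)/(2p^s − 2p^{s−1} − 1)⌉ + 2. -/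
open Polynomial

variable {F : Type} [Field F] [Fintype F] [DecidableEq F]

set_option linter.unusedSectionVars false
section Aux
variable {F : Type} [Field F] [Fintype F] [DecidableEq F]

/-- weight functions for the two parity checks -/
def wA {n : ℕ} (δ : F) : Fin n → F := fun j => (-δ) ^ (j : ℕ)
def wB {n : ℕ} (δ : F) : Fin n → F := fun j => ((j : ℕ) : F) * (-δ) ^ ((j : ℕ) - 1)

lemma dvd_sq_iff (δ : F) (P : F[X]) :
    (X + C δ) ^ 2 ∣ P ↔ P.eval (-δ) = 0 ∧ P.derivative.eval (-δ) = 0 := by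
  have hX : (X + C δ : F[X]) = X - C (-δ) := by rw [map_neg]; ring
  constructor
  · rintro ⟨q, rfl⟩
    refine ⟨by simp, ?_⟩
    rw [derivative_mul, derivative_pow]
    simp
  · rintro ⟨h1, h2⟩
    obtain ⟨q, hq⟩ := (dvd_iff_isRoot (a := -δ)).mpr h1
    rw [← hX] at hq
    have hq' : q.eval (-δ) = 0 := by
      have hd := congrArg (fun r : F[X] => r.derivative.eval (-δ)) hq
      simp only [derivative_mul] at hd
      simp at hd
      rw [h2] at hd
      exact hd.symm
    obtain ⟨r, hr⟩ := (dvd_iff_isRoot (a := -δ)).mpr hq'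
    rw [← hX] at hr
    exact ⟨r, by rw [hq, hr]; ring⟩
end Aux
set_option linter.unusedSectionVars false
section Aux2
variable {F : Type} [Field F] [Fintype F] [DecidableEq F]

lemma span_pair_eq {g b : F[X]} (h : g ∣ b) :
    Ideal.span {g, b} = Ideal.span {g} := by
  apply le_antisymm
  · rw [Ideal.span_le]
    rintro x (rfl | rfl)
    · exact Ideal.subset_span rfl
    · exact (Ideal.mem_span_singleton).mpr h
  · exact Ideal.span_mono (by simp)

lemma mem_Cij_iff {p s : ℕ} (hp : Fact p.Prime) [CharP F p] (hs : 1 ≤ s) (δ : F)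
    (c : Fin (2 * p ^ s) → F) :
    c ∈ Cij p s 0 2 δ ↔
      ((∑ j : Fin (2 * p ^ s), c j * wA δ j = 0) ∧
       (∑ j : Fin (2 * p ^ s), c j * wB δ j = 0)) := by
  have hps2 : 2 ≤ p ^ s := le_trans hp.out.two_le (Nat.le_self_pow (by omega) p)
  have hdvd : ((X + C δ) ^ 2 : F[X]) ∣ X ^ (2 * p ^ s) - C ((δ ^ 2) ^ p ^ s) := by
    have h1 : (X ^ 2 - C (δ ^ 2) : F[X]) ^ p ^ s = X ^ (2 * p ^ s) - C ((δ ^ 2) ^ p ^ s) := by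
      rw [sub_pow_char_pow, ← pow_mul]; simp [map_pow]
    have h2 : (X ^ 2 - C (δ ^ 2) : F[X]) = (X + C δ) * (X - C δ) := by
      have : (C (δ ^ 2) : F[X]) = C δ ^ 2 := by rw [map_pow]
      rw [this]; ring
    rw [← h1, h2, mul_pow]
    exact Dvd.dvd.mul_right (pow_dvd_pow _ hps2) _
  have hset : Cij p s 0 2 δ = {c : Fin (2 * p ^ s) → F |
      (∑ j : Fin (2 * p ^ s), Polynomial.C (c j) * X ^ (j : ℕ)) ∈
        Ideal.span {((X + C δ) ^ 2 : F[X])}} := by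
    unfold Cij codeOfGen
    rw [pow_zero, one_mul, span_pair_eq hdvd]
  rw [hset, Set.mem_setOf_eq, Ideal.mem_span_singleton, dvd_sq_iff]
  have hev : ∀ P : Fin (2 * p ^ s) → F,
      eval (-δ) (∑ j : Fin (2 * p ^ s), Polynomial.C (P j) * X ^ (j : ℕ)) =
        ∑ j : Fin (2 * p ^ s), P j * wA δ j := by
    intro P; simp [eval_finset_sum, wA]
  have hev' : eval (-δ) (derivative (∑ j : Fin (2 * p ^ s), Polynomial.C (c j) * X ^ (j : ℕ))) =
      ∑ j : Fin (2 * p ^ s), c j * wB δ j := by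
    rw [derivative_sum]
    simp only [derivative_C_mul, derivative_X_pow]
    simp [eval_finset_sum, wB, mul_assoc]
  rw [hev, hev']
end Aux2
section Aux3
variable {F : Type} [Field F] [Fintype F] [DecidableEq F]

lemma sum_two {n : ℕ} (a b : Fin n) (hab : a ≠ b) (xa xb : F) (g : Fin n → F) :
    ∑ j : Fin n, (if j = a then xa else if j = b then xb else 0) * g j
      = xa * g a + xb * g b := by
  rw [show (∑ j : Fin n, (if j = a then xa else if j = b then xb else 0) * g j)
      = ∑ j ∈ ({a, b} : Finset (Fin n)), (if j = a then xa else if j = b then xb else 0) * g j from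
    (Finset.sum_subset (Finset.subset_univ _) (by
      intro x _ hx
      simp only [Finset.mem_insert, Finset.mem_singleton] at hx
      push_neg at hx
      simp [hx.1, hx.2])).symm]
  rw [Finset.sum_insert (by simp [hab]), Finset.sum_singleton]
  simp [Ne.symm hab]

lemma sum_three {n : ℕ} (a b c : Fin n) (hab : a ≠ b) (hac : a ≠ c) (hbc : b ≠ c)
    (xa xb xc : F) (g : Fin n → F) :
    ∑ j : Fin n, (if j = a then xa else if j = b then xb else if j = c then xc else 0) * g j
      = xa * g a + xb * g b + xc * g c := by
  rw [show (∑ j : Fin n, (if j = a then xa else if j = b then xb else if j = c then xc else 0) * g j)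
      = ∑ j ∈ ({a, b, c} : Finset (Fin n)),
          (if j = a then xa else if j = b then xb else if j = c then xc else 0) * g j from
    (Finset.sum_subset (Finset.subset_univ _) (by
      intro x _ hx
      simp only [Finset.mem_insert, Finset.mem_singleton] at hx
      push_neg at hx
      simp [hx.1, hx.2.1, hx.2.2])).symm]
  rw [Finset.sum_insert (by simp [hab, hac]), Finset.sum_insert (by simp [hbc]),
    Finset.sum_singleton]
  simp [Ne.symm hab, Ne.symm hac, Ne.symm hbc]
  ring

noncomputable def phiMap (n : ℕ) (δ : F) : (Fin n → F) →ₗ[F] F × F where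
  toFun c := (∑ j : Fin n, c j * wA δ j, ∑ j : Fin n, c j * wB δ j)
  map_add' x y := by
    ext
    · simp [add_mul, Finset.sum_add_distrib]
    · simp [add_mul, Finset.sum_add_distrib]
  map_smul' a x := by
    ext
    · simp [Finset.mul_sum, mul_assoc]
    · simp [Finset.mul_sum, mul_assoc]

lemma card_Cij {p s : ℕ} (hp : Fact p.Prime) [CharP F p] (hs : 1 ≤ s) (δ : F) :
    Nat.card (Cij p s 0 2 δ) = Fintype.card F ^ (2 * p ^ s - 2) := by
  classical
  have hps2 : 2 ≤ p ^ s := le_trans hp.out.two_le (Nat.le_self_pow (by omega) p)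
  have hn2 : 2 ≤ 2 * p ^ s := by omega
  have hker : Cij p s 0 2 δ = ↑(LinearMap.ker (phiMap (2 * p ^ s) δ)) := by
    ext c
    rw [mem_Cij_iff hp hs δ c]
    simp [phiMap, LinearMap.mem_ker, Prod.ext_iff, SetLike.mem_coe]
  have hsurj : Function.Surjective (phiMap (2 * p ^ s) δ) := by
    intro z
    refine ⟨fun j => if j = (⟨0, by omega⟩ : Fin (2 * p ^ s)) then z.1 + z.2 * δ
      else if j = (⟨1, by omega⟩ : Fin (2 * p ^ s)) then z.2 else 0, ?_⟩
    have h01 : (⟨0, by omega⟩ : Fin (2 * p ^ s)) ≠ ⟨1, by omega⟩ := by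
      simp [Fin.ext_iff]
    show (_, _) = z
    rw [Prod.ext_iff]
    constructor
    · show (∑ j : Fin (2 * p ^ s), _ * wA δ j) = z.1
      rw [sum_two _ _ h01]
      simp [wA]
      try ring
    · show (∑ j : Fin (2 * p ^ s), _ * wB δ j) = z.2
      rw [sum_two _ _ h01]
      simp [wB]
      try ring
  have hfin : Module.finrank F (LinearMap.ker (phiMap (2 * p ^ s) δ)) = 2 * p ^ s - 2 := by
    have h1 := LinearMap.finrank_range_add_finrank_ker (phiMap (2 * p ^ s) δ)
    rw [LinearMap.range_eq_top.mpr hsurj, finrank_top] at h1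
    have h2 : Module.finrank F (F × F) = 2 := by
      simp [Module.finrank_prod]
    have h3 : Module.finrank F (Fin (2 * p ^ s) → F) = 2 * p ^ s := by
      simp [Module.finrank_pi]
    omega
  haveI : Fintype ↥(LinearMap.ker (phiMap (2 * p ^ s) δ)) := Fintype.ofFinite _
  calc Nat.card (Cij p s 0 2 δ)
      = Nat.card ↥(LinearMap.ker (phiMap (2 * p ^ s) δ)) := by rw [hker]; rfl
    _ = Fintype.card F ^ (2 * p ^ s - 2) := by
        rw [Nat.card_eq_fintype_card, Module.card_eq_pow_finrank (K := F), hfin]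
end Aux3
section Aux4
variable {F : Type} [Field F] [Fintype F] [DecidableEq F]

lemma minDist_Cij {p s : ℕ} (hp : Fact p.Prime) (hp2 : p ≠ 2) [CharP F p] (hs : 1 ≤ s)
    (δ : F) (hδ : δ ≠ 0) : minDistIs (Cij p s 0 2 δ) 2 := by
  have hpp : 2 ≤ p := hp.out.two_le
  have hps2 : p ≤ p ^ s := Nat.le_self_pow (by omega) p
  have hplt : p < 2 * p ^ s := by omega
  have h0lt : 0 < 2 * p ^ s := by omega
  set a : Fin (2 * p ^ s) := ⟨0, h0lt⟩ with ha
  set b : Fin (2 * p ^ s) := ⟨p, hplt⟩ with hb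
  have hab : a ≠ b := by
    simp [ha, hb, Fin.ext_iff]
    omega
  constructor
  · refine ⟨fun j => if j = a then δ ^ p else if j = b then 1 else 0, ?_, ?_, ?_⟩
    · rw [mem_Cij_iff hp hs]
      constructor
      · rw [sum_two _ _ hab]
        simp only [wA, ha, hb]
        rw [Odd.neg_pow (hp.out.odd_of_ne_two hp2)]
        simp
      · rw [sum_two _ _ hab]
        simp only [wB, ha, hb]
        simp [CharP.cast_eq_zero F p]
    · intro h
      have := congrFun h a
      simp at this
      exact hδ this.1
    · show hammingNorm _ = 2
      unfold hammingNorm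
      have : ({i | (if i = a then δ ^ p else if i = b then (1:F) else 0) ≠ 0} : Finset (Fin (2 * p ^ s)))
          = {a, b} := by
        ext j
        simp only [Finset.mem_filter, Finset.mem_univ, true_and, Finset.mem_insert,
          Finset.mem_singleton]
        constructor
        · intro hj
          by_contra hc
          push_neg at hc
          simp [hc.1, hc.2] at hj
        · rintro (rfl | rfl)
          · simp [pow_ne_zero p hδ]
          · simp [Ne.symm hab]
      rw [this, Finset.card_insert_of_notMem (by simp [hab]), Finset.card_singleton]
  · rintro w ⟨c, hc, hc0, rfl⟩
    by_contra hlt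
    push_neg at hlt
    obtain ⟨i, hi⟩ : ∃ i, c i ≠ 0 := Function.ne_iff.mp hc0
    have hmem : i ∈ ({j | c j ≠ 0} : Finset (Fin (2 * p ^ s))) := by simp [hi]
    have hcard : hammingNorm c ≤ 1 := by omega
    have hsingle : ∀ j, j ≠ i → c j = 0 := by
      intro j hj
      by_contra hcj
      have hmemj : j ∈ ({k | c k ≠ 0} : Finset (Fin (2 * p ^ s))) := by simp [hcj]
      have : 2 ≤ hammingNorm c := by
        unfold hammingNorm
        have := Finset.one_lt_card_iff.mpr ⟨j, i, hmemj, hmem, hj⟩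
        omega
      omega
    rw [mem_Cij_iff hp hs] at hc
    have hA := hc.1
    rw [Finset.sum_eq_single i (fun j _ hj => by rw [hsingle j hj, zero_mul])
      (fun h => absurd (Finset.mem_univ i) h)] at hA
    have : wA (n := 2 * p ^ s) δ i ≠ 0 := pow_ne_zero _ (neg_ne_zero.mpr hδ)
    exact hi (by
      rcases mul_eq_zero.mp hA with h | h
      · exact h
      · exact absurd h this)
end Aux4
section Aux5

lemma filter_mod_card (p t k : ℕ) (hp : 0 < p) (ht : t < p) :
    ((Finset.range (p * k)).filter (fun j => j % p = t)).card = k := by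
  have himg : (Finset.range (p * k)).filter (fun j => j % p = t)
      = (Finset.range k).image (fun a => p * a + t) := by
    ext j
    simp only [Finset.mem_filter, Finset.mem_range, Finset.mem_image]
    constructor
    · rintro ⟨hj, hm⟩
      refine ⟨j / p, ?_, ?_⟩
      · rw [Nat.div_lt_iff_lt_mul hp, mul_comm]
        exact hj
      · rw [← hm]
        exact Nat.div_add_mod j p
    · rintro ⟨a, ha, rfl⟩
      refine ⟨?_, ?_⟩
      · calc p * a + t < p * a + p := by omega
          _ = p * (a + 1) := by ring
          _ ≤ p * k := Nat.mul_le_mul_left p ha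
      · rw [Nat.mul_add_mod]
        exact Nat.mod_eq_of_lt ht
  rw [himg, Finset.card_image_of_injective _ (fun x y h => by
    have : p * x = p * y := by omega
    exact Nat.eq_of_mul_eq_mul_left hp this), Finset.card_range]

lemma filter_mod_card_fin {n p t : ℕ} (hp : 0 < p) (ht : t < p) (k : ℕ) (hn : n = p * k) :
    (Finset.univ.filter (fun j : Fin n => (j : ℕ) % p = t)).card = k := by
  rw [← filter_mod_card p t k hp ht, ← hn]
  rw [Finset.card_filter, Finset.card_filter]
  exact Fin.sum_univ_eq_sum_range (fun j => if j % p = t then 1 else 0) n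

lemma pointwise_pow {F : Type} [Field F] (δ : F) (j : ℕ) :
    ((j : F)) * (-δ) ^ j = (-δ) * (((j : F)) * (-δ) ^ (j - 1)) := by
  cases j with
  | zero => simp
  | succ k =>
    rw [pow_succ]
    simp only [Nat.succ_sub_one]
    push_cast
    ring

end Aux5
section Aux6
variable {F : Type} [Field F] [Fintype F] [DecidableEq F]

lemma locality_upper {p s : ℕ} (hp : Fact p.Prime) [CharP F p] (hs : 1 ≤ s)
    (δ : F) (hδ : δ ≠ 0) :
    hasAllSymbolLocality (Cij p s 0 2 δ) (2 * p ^ s - 2 * p ^ (s - 1) - 1) := by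
  intro i
  have hp0 : 0 < p := hp.out.pos
  have hpp : 2 ≤ p := hp.out.two_le
  set t := ((i : ℕ) + 1) % p with ht
  have htp : t < p := Nat.mod_lt _ hp0
  set v : Fin (2 * p ^ s) → F := fun j => (((j : ℕ) : F) - ((t : ℕ) : F)) * (-δ) ^ (j : ℕ)
    with hv
  have hvzero : ∀ j : Fin (2 * p ^ s), v j = 0 ↔ (j : ℕ) % p = t := by
    intro j
    rw [hv]
    simp only
    rw [mul_eq_zero]
    constructor
    · rintro (h | h)
      · have h2 : ((j : ℕ) : F) = ((t : ℕ) : F) := sub_eq_zero.mp h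
        have h3 : (j : ℕ) ≡ t [MOD p] := (CharP.natCast_eq_natCast F p).mp h2
        rw [Nat.ModEq] at h3
        rw [h3, Nat.mod_eq_of_lt htp]
      · exact absurd h (pow_ne_zero _ (neg_ne_zero.mpr hδ))
    · intro h
      left
      rw [sub_eq_zero]
      apply (CharP.natCast_eq_natCast F p).mpr
      rw [Nat.ModEq, h, Nat.mod_eq_of_lt htp]
  have hvsum : ∀ c ∈ Cij p s 0 2 δ, ∑ j : Fin (2 * p ^ s), c j * v j = 0 := by
    intro c hc
    rw [mem_Cij_iff hp hs] at hc
    have hterm : ∀ j : Fin (2 * p ^ s),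
        c j * v j = (-δ) * (c j * wB δ j) - ((t : ℕ) : F) * (c j * wA δ j) := by
      intro j
      rw [hv]
      simp only [wA, wB]
      rw [show (-δ) * (c j * (((j : ℕ) : F) * (-δ) ^ ((j : ℕ) - 1)))
          = c j * ((-δ) * (((j : ℕ) : F) * (-δ) ^ ((j : ℕ) - 1))) from by ring,
        ← pointwise_pow δ (j : ℕ)]
      ring
    calc ∑ j : Fin (2 * p ^ s), c j * v j
        = (-δ) * (∑ j : Fin (2 * p ^ s), c j * wB δ j)
          - ((t : ℕ) : F) * (∑ j : Fin (2 * p ^ s), c j * wA δ j) := by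
          rw [Finset.mul_sum, Finset.mul_sum, ← Finset.sum_sub_distrib]
          exact Finset.sum_congr rfl (fun j _ => hterm j)
      _ = 0 := by rw [hc.1, hc.2]; ring
  have hvi : v i ≠ 0 := by
    rw [hv]
    simp only
    apply mul_ne_zero _ (pow_ne_zero _ (neg_ne_zero.mpr hδ))
    rw [sub_ne_zero]
    intro heq
    have h1 : (i : ℕ) ≡ t [MOD p] := (CharP.natCast_eq_natCast F p).mp heq
    have h2 : ((i : ℕ) + 1) ≡ t [MOD p] := (Nat.mod_modEq _ p).symm
    have h3 : (i : ℕ) ≡ (i : ℕ) + 1 [MOD p] := h1.trans h2.symm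
    have h4 := (Nat.modEq_iff_dvd' (by omega)).mp h3
    simp at h4
    omega
  set S := Finset.univ.filter (fun j : Fin (2 * p ^ s) => v j ≠ 0) with hS
  have hiS : i ∈ S := by simp [hS, hvi]
  have hScard : S.card = 2 * p ^ s - 2 * p ^ (s - 1) := by
    have hps : p ^ s = p * p ^ (s - 1) := by
      conv_lhs => rw [show s = (s - 1) + 1 by omega]
      rw [pow_succ']
    have hcompl :
        (Finset.univ.filter (fun j : Fin (2 * p ^ s) => v j = 0)).card = 2 * p ^ (s - 1) := by
      have heq : (Finset.univ.filter (fun j : Fin (2 * p ^ s) => v j = 0))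
          = Finset.univ.filter (fun j : Fin (2 * p ^ s) => (j : ℕ) % p = t) := by
        ext j
        simp only [Finset.mem_filter, Finset.mem_univ, true_and]
        exact hvzero j
      rw [heq]
      exact filter_mod_card_fin hp0 htp (2 * p ^ (s - 1)) (by rw [hps]; ring)
    have hto : S.card + (Finset.univ.filter (fun j : Fin (2 * p ^ s) => v j = 0)).card
        = 2 * p ^ s := by
      have h := Finset.card_filter_add_card_filter_not
        (s := (Finset.univ : Finset (Fin (2 * p ^ s)))) (p := fun j => v j ≠ 0)
      simpa [not_not, hS] using h
    have hple : p ^ (s - 1) ≤ p ^ s := Nat.pow_le_pow_right (by omega) (by omega)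
    omega
  refine ⟨S.erase i, Finset.notMem_erase i S, ?_, ?_⟩
  · rw [Finset.card_erase_of_mem hiS, hScard]
  · refine ⟨fun y => -(v i)⁻¹ * ∑ j : {x // x ∈ S.erase i}, y j * v j.1, ?_⟩
    intro c hc
    have h0 := hvsum c hc
    have hsplit : ∑ j : Fin (2 * p ^ s), c j * v j = ∑ j ∈ S, c j * v j := by
      symm
      apply Finset.sum_subset (Finset.subset_univ S)
      intro x _ hx
      have hvx : v x = 0 := by
        by_contra hvx
        exact hx (by simp [hS, hvx])
      rw [hvx, mul_zero]
    rw [hsplit, ← Finset.add_sum_erase _ _ hiS] at h0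
    have hsum2 : (∑ j : {x // x ∈ S.erase i}, c j.1 * v j.1) = ∑ j ∈ S.erase i, c j * v j :=
      Finset.sum_coe_sort (S.erase i) (fun j => c j * v j)
    show c i = -(v i)⁻¹ * ∑ j : {x // x ∈ S.erase i}, c j.1 * v j.1
    rw [hsum2]
    have h1 : c i * v i = -∑ j ∈ S.erase i, c j * v j := eq_neg_of_add_eq_zero_left h0
    have hsumneg : ∑ j ∈ S.erase i, c j * v j = -(c i * v i) := by rw [h1, neg_neg]
    rw [hsumneg]
    field_simp
end Aux6
section Aux7
variable {F : Type} [Field F] [Fintype F] [DecidableEq F]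

lemma exists_solve (a b cc d e f : F) (h : a * d - b * cc ≠ 0) :
    ∃ x y : F, a * x + b * y = e ∧ cc * x + d * y = f := by
  refine ⟨(e * d - b * f) / (a * d - b * cc), (a * f - e * cc) / (a * d - b * cc), ?_, ?_⟩
  · field_simp
    ring
  · rw [div_eq_mul_inv, div_eq_mul_inv]
    linear_combination f * mul_inv_cancel₀ h

lemma locality_lower {p s : ℕ} (hp : Fact p.Prime) [CharP F p] (hs : 1 ≤ s)
    (δ : F) (hδ : δ ≠ 0) (r' : ℕ) (h : hasAllSymbolLocality (Cij p s 0 2 δ) r') :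
    2 * p ^ s - 2 * p ^ (s - 1) - 1 ≤ r' := by
  by_contra hlt
  push_neg at hlt
  have hpp : 2 ≤ p := hp.out.two_le
  have hp0 : 0 < p := hp.out.pos
  have hps : p ^ s = p * p ^ (s - 1) := by
    conv_lhs => rw [show s = (s - 1) + 1 by omega]
    rw [pow_succ']
  have hple : p ^ (s - 1) ≤ p ^ s := Nat.pow_le_pow_right (by omega) (by omega)
  have hps1pos : 0 < p ^ (s - 1) := Nat.pow_pos hp0
  have hn0 : 0 < 2 * p ^ s := by omega
  set i : Fin (2 * p ^ s) := ⟨0, hn0⟩ with hidef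
  obtain ⟨I, hiI, hIcard, f, hf⟩ := h i
  set J := (Finset.univ.erase i) \ I with hJ
  have hJcard : 2 * p ^ (s - 1) + 1 ≤ J.card := by
    have h1 : (Finset.univ.erase i).card = 2 * p ^ s - 1 := by
      rw [Finset.card_erase_of_mem (Finset.mem_univ i), Finset.card_univ, Fintype.card_fin]
    have h2 : (Finset.univ.erase i).card - I.card ≤ J.card := by
      rw [hJ]; exact Finset.le_card_sdiff I (Finset.univ.erase i)
    have h5 : 2 * p ^ (s - 1) ≤ p ^ s := by
      rw [hps]
      exact Nat.mul_le_mul_right _ (by omega)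
    omega
  have hxJ : ∃ j1 ∈ J, ∃ j2 ∈ J, ((j1 : ℕ)) % p ≠ ((j2 : ℕ)) % p := by
    by_contra hall
    push_neg at hall
    obtain ⟨j0, hj0⟩ : J.Nonempty := Finset.card_pos.mp (by omega)
    have hsub : J ⊆ Finset.univ.filter
        (fun j : Fin (2 * p ^ s) => (j : ℕ) % p = (j0 : ℕ) % p) := by
      intro x hx
      simp only [Finset.mem_filter, Finset.mem_univ, true_and]
      exact hall x hx j0 hj0
    have hcount := filter_mod_card_fin (n := 2 * p ^ s) (t := (j0 : ℕ) % p) hp0 (Nat.mod_lt _ hp0)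
      (2 * p ^ (s - 1)) (by rw [hps]; ring)
    have := Finset.card_le_card hsub
    omega
  obtain ⟨j1, hj1, j2, hj2, hne⟩ := hxJ
  have hj1i : j1 ≠ i := (Finset.mem_erase.mp (Finset.mem_sdiff.mp hj1).1).1
  have hj2i : j2 ≠ i := (Finset.mem_erase.mp (Finset.mem_sdiff.mp hj2).1).1
  have hj1I : j1 ∉ I := (Finset.mem_sdiff.mp hj1).2
  have hj2I : j2 ∉ I := (Finset.mem_sdiff.mp hj2).2
  have hj12 : j1 ≠ j2 := fun hq => hne (by rw [hq])
  have hv1 : 1 ≤ (j1 : ℕ) := by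
    rcases Nat.eq_zero_or_pos (j1 : ℕ) with h0 | h0
    · exact absurd (Fin.ext h0 : j1 = i) hj1i
    · omega
  have hv2 : 1 ≤ (j2 : ℕ) := by
    rcases Nat.eq_zero_or_pos (j2 : ℕ) with h0 | h0
    · exact absurd (Fin.ext h0 : j2 = i) hj2i
    · omega
  have hc12 : ((j1 : ℕ) : F) ≠ ((j2 : ℕ) : F) := by
    intro hq
    exact hne ((CharP.natCast_eq_natCast F p).mp hq)
  have hneg : (-δ : F) ≠ 0 := neg_ne_zero.mpr hδ
  have hdet : wA δ j1 * wB δ j2 - wA δ j2 * wB δ j1 ≠ 0 := by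
    simp only [wA, wB]
    have hkey : (-δ) ^ ((j1 : ℕ)) * (((j2 : ℕ) : F) * (-δ) ^ ((j2 : ℕ) - 1))
        - (-δ) ^ ((j2 : ℕ)) * (((j1 : ℕ) : F) * (-δ) ^ ((j1 : ℕ) - 1))
        = (-δ) ^ ((j1 : ℕ) - 1) * (-δ) ^ ((j2 : ℕ) - 1) * (-δ)
          * (((j2 : ℕ) : F) - ((j1 : ℕ) : F)) := by
      rw [show (j1 : ℕ) = ((j1 : ℕ) - 1) + 1 by omega, show (j2 : ℕ) = ((j2 : ℕ) - 1) + 1 by omega]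
      simp only [Nat.add_sub_cancel, pow_succ]
      push_cast
      ring
    rw [hkey]
    exact mul_ne_zero (mul_ne_zero (mul_ne_zero (pow_ne_zero _ hneg) (pow_ne_zero _ hneg)) hneg)
      (sub_ne_zero.mpr (Ne.symm hc12))
  obtain ⟨x1, x2, hx1, hx2⟩ := exists_solve (wA δ j1) (wA δ j2) (wB δ j1) (wB δ j2)
    (-(wA δ i)) (-(wB δ i)) hdet
  have hcmem : (fun j => if j = i then (1 : F) else if j = j1 then x1 else if j = j2 then x2
      else 0) ∈ Cij p s 0 2 δ := by
    rw [mem_Cij_iff hp hs δ]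
    constructor
    · rw [sum_three i j1 j2 (Ne.symm hj1i) (Ne.symm hj2i) hj12 1 x1 x2 (wA δ)]
      linear_combination hx1
    · rw [sum_three i j1 j2 (Ne.symm hj1i) (Ne.symm hj2i) hj12 1 x1 x2 (wB δ)]
      linear_combination hx2
  have hzero_mem : (0 : Fin (2 * p ^ s) → F) ∈ Cij p s 0 2 δ := by
    rw [mem_Cij_iff hp hs δ]
    simp
  have h1 := hf _ hcmem
  have h2 := hf 0 hzero_mem
  have hrest : (fun j : {x : Fin (2 * p ^ s) // x ∈ I} =>
      (fun k => if k = i then (1 : F) else if k = j1 then x1 else if k = j2 then x2 else 0) j.1)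
      = (fun j : {x : Fin (2 * p ^ s) // x ∈ I} => (0 : Fin (2 * p ^ s) → F) j.1) := by
    funext j
    obtain ⟨jv, hj⟩ := j
    simp only [Pi.zero_apply]
    have n1 : jv ≠ i := fun hq => hiI (hq ▸ hj)
    have n2 : jv ≠ j1 := fun hq => hj1I (hq ▸ hj)
    have n3 : jv ≠ j2 := fun hq => hj2I (hq ▸ hj)
    rw [if_neg n1, if_neg n2, if_neg n3]
  rw [hrest, ← h2] at h1
  simp only [Pi.zero_apply, if_pos rfl] at h1
  exact one_ne_zero h1
end Aux7
section Aux8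

lemma charP_of_card {p m : ℕ} (hp : p.Prime) (hm : 1 ≤ m) {F : Type} [Field F] [Fintype F]
    (hcard : Fintype.card F = p ^ m) : CharP F p := by
  obtain ⟨q, hq⟩ := CharP.exists F
  haveI := hq
  obtain ⟨n, hqprime, hcard'⟩ := FiniteField.card F q
  have heq : q ^ (n : ℕ) = p ^ m := by rw [← hcard', hcard]
  have hdvd : q ∣ p ^ m := by
    rw [← heq]
    exact dvd_pow_self q (by exact_mod_cast n.ne_zero)
  have hqp : q = p := (Nat.prime_dvd_prime_iff_eq hqprime hp).mp (hqprime.dvd_of_dvd_pow hdvd)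
  exact CharP.congr q hqp

lemma arith_lemma {p s : ℕ} (hpp : 3 ≤ p) (hs : 2 ≤ s) :
    (2 : ℤ) = ((2 * p ^ s : ℕ) : ℤ) - ((2 * p ^ s - 2 : ℕ) : ℤ)
      - (nceil (2 * p ^ s - 2) (2 * p ^ s - 2 * p ^ (s - 1) - 1) : ℤ) + 2 := by
  have hps : p ^ s = p * p ^ (s - 1) := by
    conv_lhs => rw [show s = (s - 1) + 1 by omega]
    rw [pow_succ']
  have hB : 3 ≤ p ^ (s - 1) := le_trans hpp (Nat.le_self_pow (by omega) p)
  have h3B : 3 * p ^ (s - 1) ≤ p ^ s := by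
    rw [hps]
    exact Nat.mul_le_mul_right _ hpp
  have hn : nceil (2 * p ^ s - 2) (2 * p ^ s - 2 * p ^ (s - 1) - 1) = 2 := by
    unfold nceil
    apply Nat.div_eq_of_lt_le
    · omega
    · omega
  rw [hn]
  have h2A : 2 ≤ 2 * p ^ s := by omega
  rw [Nat.cast_sub h2A]
  push_cast
  ring
end Aux8
/-- For odd prime `p`, `s ≥ 2` and `λ₀ = δ²` a nonzero square, the code
`C_{0,2}(2p^s, λ₀)` has length `2p^s`, dimension `2p^s − 2`, minimum distance `2` and minimum
locality `2p^s − 2p^{s−1} − 1`; in particular it is an optimal LRC. -/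
theorem stmt12 {p m : ℕ} (hp : p.Prime) (hp2 : p ≠ 2) (hm : 1 ≤ m)
    {F : Type} [Field F] [Fintype F] [DecidableEq F] (hcard : Fintype.card F = p ^ m)
    (s : ℕ) (hs : 2 ≤ s) (δ : F) (hδ : δ ≠ 0) :
    Nat.card (Cij p s 0 2 δ) = (p ^ m) ^ (2 * p ^ s - 2) ∧
    minDistIs (Cij p s 0 2 δ) 2 ∧
    minLocalityIs (Cij p s 0 2 δ) (2 * p ^ s - 2 * p ^ (s - 1) - 1) ∧
    (2 : ℤ) = ((2 * p ^ s : ℕ) : ℤ) - ((2 * p ^ s - 2 : ℕ) : ℤ)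
      - (nceil (2 * p ^ s - 2) (2 * p ^ s - 2 * p ^ (s - 1) - 1) : ℤ) + 2 := by
  have hfact : Fact p.Prime := ⟨hp⟩
  haveI : CharP F p := charP_of_card hp hm hcard
  have hs1 : 1 ≤ s := by omega
  have hpp3 : 3 ≤ p := by
    have := hp.two_le
    omega
  refine ⟨?_, minDist_Cij hfact hp2 hs1 δ hδ,
    ⟨locality_upper hfact hs1 δ hδ, fun r' hr' => locality_lower hfact hs1 δ hδ r' hr'⟩,
    arith_lemma hpp3 hs⟩
  rw [card_Cij hfact hs1 δ, hcard]
end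

section
/- Let p be an odd prime, m ≥ 1, 1 ≤ i ≤ p − 1, and let λ_0 = δ^2 be a nonzero square in F_{p^m}. Then the code C_{i,p}(2p, λ_0) (taking s = 1) is a linear code over F_{p^m} of length 2p, dimension p − i, minimum distance 2(i + 1), and minimum locality 1; in particular it is an optimal LRC, i.e., 2(i + 1) = 2p − (p − i) − ⌈(p − i)/1⌉ + 2. -/
open Polynomial

variable {F : Type} [Field F] [Fintype F] [DecidableEq F]

namespace Stmt13Aux
set_option linter.unusedSectionVars false
set_option linter.unusedVariables false
open Finset

noncomputable def P {n : ℕ} (c : Fin n → F) : F[X] := ∑ j : Fin n, C (c j) * X ^ (j : ℕ)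

















lemma coeff_P {n : ℕ} (c : Fin n → F) (k : ℕ) :
    (P c).coeff k = if h : k < n then c ⟨k, h⟩ else 0 := by
  rw [P, finset_sum_coeff]
  simp only [coeff_C_mul, coeff_X_pow, mul_ite, mul_one, mul_zero]
  split
  · next h =>
    rw [Finset.sum_eq_single (⟨k, h⟩ : Fin n)]
    · simp
    · intro j _ hj
      rw [if_neg]
      intro hc
      exact hj (Fin.ext hc.symm)
    · simp
  · next h =>
    apply Finset.sum_eq_zero
    intro j _
    rw [if_neg]
    omega

lemma degree_P_lt {n : ℕ} (c : Fin n → F) : (P c).degree < n := by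
  rw [degree_lt_iff_coeff_zero]
  intro k hk
  rw [coeff_P, dif_neg]
  exact fun h => absurd hk (by exact_mod_cast Nat.not_le.2 h)

lemma P_vec {n : ℕ} (a : F[X]) (ha : a.degree < n) :
    P (fun k : Fin n => a.coeff k) = a := by
  ext k
  rw [coeff_P]
  split
  · rfl
  · next h =>
    exact (coeff_eq_zero_of_degree_lt (lt_of_lt_of_le ha (by exact_mod_cast Nat.not_lt.1 h))).symm

lemma hammingNorm_eq {n : ℕ} (c : Fin n → F) : hammingNorm c = (P c).support.card := by
  have : (P c).support = (Finset.univ.filter fun k : Fin n => c k ≠ 0).image Fin.val := by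
    ext k
    simp only [Polynomial.mem_support_iff, coeff_P, Finset.mem_image, Finset.mem_filter,
      Finset.mem_univ, true_and]
    constructor
    · intro h
      split at h
      · next hk => exact ⟨⟨k, hk⟩, h, rfl⟩
      · exact absurd rfl h
    · rintro ⟨j, hj, rfl⟩
      simpa using hj
  rw [hammingNorm, this, Finset.card_image_of_injective _ Fin.val_injective]

lemma coeff_comb {p : ℕ} (u : F) (a : F[X]) (ha : a.natDegree ≤ p - 1) (hp0 : 0 < p) (k : ℕ) :
    (a * (X ^ p + C u)).coeff k = if k < p then u * a.coeff k else a.coeff (k - p) := by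
  have hz : ∀ t, p ≤ t → a.coeff t = 0 := by
    intro t ht
    by_cases ha0 : a = 0
    · simp [ha0]
    · exact coeff_eq_zero_of_natDegree_lt (by omega)
  have : a * (X ^ p + C u) = a * X ^ p + C u * a := by ring
  rw [this, coeff_add, coeff_mul_X_pow', coeff_C_mul]
  split
  · next h => rw [if_neg (by omega), hz k (by omega), mul_zero, add_zero]
  · next h => rw [if_pos (by omega), zero_add]

lemma support_X_mul' (b : F[X]) : (X * b).support = b.support.map ⟨(· + 1), add_left_injective 1⟩ := by
  ext k
  cases k with
  | zero => simp [Polynomial.mem_support_iff, coeff_X_mul]  -- coeff (X*b) 0 = 0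
  | succ k => simp [Polynomial.mem_support_iff, coeff_X_mul]

lemma support_card_ge {p : ℕ} (hp : p.Prime) [CharP F p] {c : F} (hc : c ≠ 0) :
    ∀ n : ℕ, n < p → ∀ a : F[X], a ≠ 0 → a.natDegree ≤ n →
      ∀ i : ℕ, (X - C c) ^ i ∣ a → i + 1 ≤ a.support.card := by
  intro n
  induction n using Nat.strong_induction_on with
  | _ n IH =>
  intro hn a ha hdeg i hdvd
  match i with
  | 0 =>
    simpa [Nat.succ_le_iff, Finset.card_pos] using (Polynomial.support_nonempty.2 ha)
  | j + 1 =>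
    have hXC : (X - C c : F[X]) ≠ 0 := Polynomial.X_sub_C_ne_zero c
    have hdega : j + 1 ≤ a.natDegree := by
      have := Polynomial.natDegree_le_of_dvd hdvd ha
      rwa [Polynomial.natDegree_pow, Polynomial.natDegree_X_sub_C, mul_one] at this
    by_cases h0 : a.coeff 0 = 0
    · obtain ⟨b, rfl⟩ := Polynomial.X_dvd_iff.2 h0
      have hb : b ≠ 0 := fun h => ha (by simp [h])
      have hco : IsCoprime ((X : F[X]) - C c) X := by
        have := Polynomial.isCoprime_X_sub_C_of_isUnit_sub (a := c) (b := (0:F))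
          (by simpa using hc.isUnit)
        simpa using this
      have hdvd' : (X - C c) ^ (j + 1) ∣ b :=
        (hco.pow_left).dvd_of_dvd_mul_left hdvd
      have hdb : b.natDegree < n := by
        have : (X * b).natDegree = 1 + b.natDegree := by
          rw [Polynomial.natDegree_mul Polynomial.X_ne_zero hb, Polynomial.natDegree_X]
        omega
      have := IH b.natDegree hdb (lt_trans hdb hn) b hb le_rfl (j + 1) hdvd'
      rwa [support_X_mul', Finset.card_map]
    · -- derivative argument
      obtain ⟨q, hq⟩ := hdvd
      have hd1 : a.natDegree ≠ 0 := by omega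
      have hda : (derivative a) ≠ 0 := by
        intro h
        have hlc := Polynomial.coeff_derivative a (a.natDegree - 1)
        rw [h] at hlc
        have h1 : a.natDegree - 1 + 1 = a.natDegree := by omega
        rw [h1] at hlc
        have h2 : ((a.natDegree - 1 : ℕ) : F) + 1 ≠ 0 := by
          have : (((a.natDegree - 1) + 1 : ℕ) : F) ≠ 0 := by
            rw [Ne, CharP.cast_eq_zero_iff F p]
            intro hdvdp
            have := Nat.le_of_dvd (by omega) hdvdp
            omega
          push_cast at this
          exact this
        exact (Polynomial.leadingCoeff_ne_zero.2 ha)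
          (by have := (mul_eq_zero.1 hlc.symm).resolve_right h2; exact this)
      have hdvdd : (X - C c) ^ j ∣ derivative a := by
        rw [hq, derivative_mul]
        apply dvd_add
        · rw [derivative_pow, Polynomial.derivative_X_sub_C, mul_one]
          exact (dvd_mul_left _ _).mul_right _
        · exact (pow_dvd_pow _ (by omega)).mul_right _
      have hdd : (derivative a).natDegree < n :=
        lt_of_lt_of_le (Polynomial.natDegree_derivative_lt hd1) hdeg
      have IH' := IH (derivative a).natDegree hdd (lt_trans hdd hn) _ hda le_rfl j hdvdd
      have hsub : insert 0 ((derivative a).support.image (· + 1)) ⊆ a.support := by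
        intro k hk
        rcases Finset.mem_insert.1 hk with rfl | hk
        · exact Polynomial.mem_support_iff.2 h0
        · obtain ⟨t, ht, rfl⟩ := Finset.mem_image.1 hk
          rw [Polynomial.mem_support_iff] at ht ⊢
          intro hz
          apply ht
          rw [Polynomial.coeff_derivative, hz, zero_mul]
      calc j + 1 + 1 ≤ ((derivative a).support.image (· + 1)).card + 1 := by
            rw [Finset.card_image_of_injective _ (add_left_injective 1)]; omega
        _ = (insert 0 ((derivative a).support.image (· + 1))).card :=
            (Finset.card_insert_of_notMem (by simp)).symm
        _ ≤ a.support.card := Finset.card_le_card hsub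

lemma support_pow_linear {p : ℕ} (hp : p.Prime) [CharP F p] {e : F} (he : e ≠ 0) {i : ℕ}
    (hip : i < p) : ((X + C e) ^ i).support = Finset.range (i + 1) := by
  ext k
  rw [Polynomial.mem_support_iff, coeff_X_add_C_pow, Finset.mem_range]
  constructor
  · intro h
    by_contra hk
    rw [Nat.choose_eq_zero_of_lt (by omega), Nat.cast_zero, mul_zero] at h
    exact h rfl
  · intro hk
    apply mul_ne_zero (pow_ne_zero _ he)
    rw [Ne, CharP.cast_eq_zero_iff F p]
    intro hdv
    have h1 : p ∣ i.factorial := by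
      have he2 := Nat.choose_mul_factorial_mul_factorial (show k ≤ i by omega)
      exact he2 ▸ (hdv.mul_right _).mul_right _
    have := (Nat.Prime.dvd_factorial hp).1 h1
    omega

lemma support_card_shift {p : ℕ} (hp0 : 0 < p) {u : F} (hu : u ≠ 0) (a : F[X])
    (ha : a.natDegree ≤ p - 1) :
    (a * X ^ p + C u * a).support.card = 2 * a.support.card := by
  have hz : ∀ k, p ≤ k → a.coeff k = 0 := by
    intro k hk
    by_cases ha0 : a = 0
    · simp [ha0]
    · exact coeff_eq_zero_of_natDegree_lt (by omega)
  have hcoeff : ∀ k, (a * X ^ p + C u * a).coeff k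
      = (if p ≤ k then a.coeff (k - p) else 0) + u * a.coeff k := by
    intro k; rw [coeff_add, coeff_mul_X_pow', coeff_C_mul]
  have hsupp : (a * X ^ p + C u * a).support = a.support ∪ a.support.image (· + p) := by
    ext k
    rw [Polynomial.mem_support_iff, hcoeff, Finset.mem_union, Finset.mem_image]
    by_cases hk : p ≤ k
    · rw [if_pos hk, hz k hk, mul_zero, add_zero]
      constructor
      · intro h
        exact Or.inr ⟨k - p, Polynomial.mem_support_iff.2 h, by omega⟩
      · rintro (h | ⟨t, ht, rfl⟩)
        · exact absurd (hz k hk) (Polynomial.mem_support_iff.1 h)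
        · simpa using Polynomial.mem_support_iff.1 ht
    · rw [if_neg hk, zero_add]
      constructor
      · intro h
        exact Or.inl (Polynomial.mem_support_iff.2 fun h0 => h (by rw [h0, mul_zero]))
      · rintro (h | ⟨t, ht, rfl⟩)
        · exact mul_ne_zero hu (Polynomial.mem_support_iff.1 h)
        · omega
    
  rw [hsupp, Finset.card_union_of_disjoint, Finset.card_image_of_injective _ (add_left_injective p),
    two_mul]
  rw [Finset.disjoint_left]
  intro k hk hk2
  obtain ⟨t, ht, rfl⟩ := Finset.mem_image.1 hk2
  exact (Polynomial.mem_support_iff.1 hk) (hz _ (by omega))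


end Stmt13Aux

open Stmt13Aux in
set_option maxHeartbeats 1000000 in
/-- For odd prime `p`, `1 ≤ i ≤ p − 1` and `λ₀ = δ²` a nonzero square, the code
`C_{i,p}(2p, λ₀)` (with `s = 1`) has length `2p`, dimension `p − i`, minimum distance
`2(i + 1)` and minimum locality `1`; in particular it is an optimal LRC. -/
theorem stmt13 {p m : ℕ} (hp : p.Prime) (hp2 : p ≠ 2) (hm : 1 ≤ m)
    {F : Type} [Field F] [Fintype F] [DecidableEq F] (hcard : Fintype.card F = p ^ m)
    (i : ℕ) (hi1 : 1 ≤ i) (hip : i ≤ p - 1) (δ : F) (hδ : δ ≠ 0) :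
    Nat.card (Cij p 1 i p δ) = (p ^ m) ^ (p - i) ∧
    minDistIs (Cij p 1 i p δ) (2 * (i + 1)) ∧
    minLocalityIs (Cij p 1 i p δ) 1 ∧
    (2 * (i + 1) : ℤ) = ((2 * p : ℕ) : ℤ) - ((p - i : ℕ) : ℤ) - (nceil (p - i) 1 : ℤ) + 2 := by

  haveI hfact : Fact p.Prime := ⟨hp⟩
  have hp3 : 3 ≤ p := by
    have h2 := hp.two_le
    omega
  have hiltp : i < p := by omega
  haveI hchar : CharP F p := by
    obtain ⟨n0, hr, hcard'⟩ := FiniteField.card F (ringChar F)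
    have hdvd : p ∣ ringChar F ^ (n0 : ℕ) := by
      rw [← hcard', hcard]
      exact dvd_pow_self p (by omega)
    have : p = ringChar F := (Nat.prime_dvd_prime_iff_eq hp hr).1 (hp.dvd_of_dvd_pow hdvd)
    exact this ▸ ringChar.charP F
  -- abbreviations
  set u : F := δ ^ p with hu_def
  have hu : u ≠ 0 := pow_ne_zero _ hδ
  set g : F[X] := (X - C δ) ^ i * (X + C δ) ^ p with hg_def
  have hXp : ((X : F[X]) + C δ) ^ p = X ^ p + C u := by
    rw [add_pow_char, ← C_pow]
  have hXm : ((X : F[X]) - C δ) ^ p = X ^ p - C u := by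
    rw [sub_pow_char, ← C_pow]
  have hmod : (X : F[X]) ^ (2 * p ^ 1) - C ((δ ^ 2) ^ p ^ 1) = (X - C δ) ^ (p - i) * g := by
    have h1 : (X - C δ) ^ (p - i) * g = ((X - C δ) * (X + C δ)) ^ p := by
      rw [hg_def, ← mul_assoc, ← pow_add, Nat.sub_add_cancel (le_of_lt hiltp), mul_pow]
    rw [h1, show ((X : F[X]) - C δ) * (X + C δ) = X ^ 2 - C (δ ^ 2) by rw [C_pow]; ring,
      sub_pow_char, pow_one, pow_mul, C_pow]
  have hgne : g ≠ 0 := mul_ne_zero (pow_ne_zero _ (X_sub_C_ne_zero δ)) (pow_ne_zero _ (X_add_C_ne_zero δ))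
  have hgdeg : g.natDegree = i + p := by
    rw [hg_def, Polynomial.natDegree_mul (pow_ne_zero _ (X_sub_C_ne_zero δ))
      (pow_ne_zero _ (X_add_C_ne_zero δ)), natDegree_pow, natDegree_pow,
      natDegree_X_sub_C, natDegree_X_add_C, mul_one, mul_one]
  have hspan : Ideal.span {g, (X:F[X]) ^ (2 * p ^ 1) - C ((δ ^ 2) ^ p ^ 1)} = Ideal.span {g} := by
    have : ({g, (X:F[X]) ^ (2 * p ^ 1) - C ((δ ^ 2) ^ p ^ 1)} : Set F[X])
        = insert g {(X:F[X]) ^ (2 * p ^ 1) - C ((δ ^ 2) ^ p ^ 1)} := rfl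
    rw [this, Ideal.span_insert, sup_eq_left.2]
    rw [Ideal.span_singleton_le_span_singleton, hmod]
    exact Dvd.intro_left _ rfl
  have hmem : ∀ c : Fin (2 * p ^ 1) → F, c ∈ Cij p 1 i p δ ↔ g ∣ P c := by
    intro c
    show P c ∈ Ideal.span {g, (X:F[X]) ^ (2 * p ^ 1) - C ((δ ^ 2) ^ p ^ 1)} ↔ _
    rw [hspan, Ideal.mem_span_singleton]

  have hn2p : (2 * p ^ 1) = 2 * p := by rw [pow_one]
  -- constructing codewords
  have mk : ∀ q0 : F[X], q0.natDegree ≤ p - i - 1 →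
      ((fun k : Fin (2 * p ^ 1) => (g * q0).coeff (k : ℕ)) ∈ Cij p 1 i p δ ∧
        P (fun k : Fin (2 * p ^ 1) => (g * q0).coeff (k : ℕ)) = g * q0) := by
    intro q0 hq0
    have hdeg : (g * q0).degree < ((2 * p ^ 1 : ℕ) : WithBot ℕ) := by
      by_cases h0 : q0 = 0
      · rw [h0, mul_zero, Polynomial.degree_zero]
        exact WithBot.bot_lt_coe _
      · have hlt : (g * q0).natDegree < 2 * p ^ 1 := by
          rw [Polynomial.natDegree_mul hgne h0, hgdeg, hn2p]
          omega
        exact (Polynomial.natDegree_lt_iff_degree_lt (mul_ne_zero hgne h0)).1 hlt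
    have hPv := P_vec (g * q0) hdeg
    exact ⟨(hmem _).2 (by rw [hPv]; exact Dvd.intro _ rfl), hPv⟩
  -- representation of codewords
  have rep : ∀ c ∈ Cij p 1 i p δ, ∃ a : F[X],
      (X - C δ) ^ i ∣ a ∧ a.natDegree ≤ p - 1 ∧ (c ≠ 0 → a ≠ 0) ∧
      ∀ k : Fin (2 * p ^ 1), c k = (a * (X ^ p + C u)).coeff (k : ℕ) := by
    intro c hc
    obtain ⟨q0, hq0⟩ := (hmem c).1 hc
    by_cases h0 : q0 = 0
    · have hc0 : c = 0 := by
        funext k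
        have hck := coeff_P c (k : ℕ)
        rw [hq0, h0, mul_zero, Polynomial.coeff_zero, dif_pos k.isLt] at hck
        simpa using hck.symm
      refine ⟨0, dvd_zero _, by simp, fun hcne => absurd hc0 hcne, ?_⟩
      intro k
      rw [hc0]
      simp
    · have hqdeg : q0.natDegree ≤ p - i - 1 := by
        have hlt : (P c).degree < ((2 * p ^ 1 : ℕ) : WithBot ℕ) := degree_P_lt c
        rw [hq0] at hlt
        have h2 := (Polynomial.natDegree_lt_iff_degree_lt (mul_ne_zero hgne h0)).2 hlt
        rw [Polynomial.natDegree_mul hgne h0, hgdeg, hn2p] at h2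
        omega
      refine ⟨(X - C δ) ^ i * q0, dvd_mul_right _ _, ?_, fun _ =>
        mul_ne_zero (pow_ne_zero _ (X_sub_C_ne_zero δ)) h0, ?_⟩
      · rw [Polynomial.natDegree_mul (pow_ne_zero _ (X_sub_C_ne_zero δ)) h0,
          natDegree_pow, natDegree_X_sub_C, mul_one]
        omega
      · intro k
        have hck := coeff_P c (k : ℕ)
        rw [dif_pos k.isLt] at hck
        have hform : g * q0 = ((X - C δ) ^ i * q0) * (X ^ p + C u) := by
          rw [hg_def, hXp]; ring
        rw [hq0, hform] at hck
        simpa using hck.symm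
  -- counting
  have hPdeg : ∀ v : Fin (p - i) → F, (P v).natDegree ≤ p - i - 1 := by
    intro v
    by_cases h0 : P v = 0
    · rw [h0]; simp
    · have := (Polynomial.natDegree_lt_iff_degree_lt h0).2 (degree_P_lt v)
      omega
  let Φ : (Fin (p - i) → F) → (Cij p 1 i p δ) := fun v =>
    ⟨fun k => (g * P v).coeff (k : ℕ), (mk (P v) (hPdeg v)).1⟩
  have hbij : Function.Bijective Φ := by
    constructor
    · intro v w h
      have h1 : P (fun k : Fin (2 * p ^ 1) => (g * P v).coeff (k : ℕ))
          = P (fun k : Fin (2 * p ^ 1) => (g * P w).coeff (k : ℕ)) := by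
        have h2 := congrArg Subtype.val h
        simp only [Φ] at h2
        rw [h2]
      rw [(mk (P v) (hPdeg v)).2, (mk (P w) (hPdeg w)).2] at h1
      have h3 : P v = P w := mul_left_cancel₀ hgne h1
      funext j
      have hv := coeff_P v (j : ℕ)
      have hw := coeff_P w (j : ℕ)
      rw [dif_pos j.isLt] at hv hw
      simp only [Fin.eta] at hv hw
      rw [← hv, ← hw, h3]
    · rintro ⟨c, hc⟩
      obtain ⟨q0, hq0⟩ := (hmem c).1 hc
      have hqdeg : q0.degree < ((p - i : ℕ) : WithBot ℕ) := by
        by_cases h0 : q0 = 0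
        · rw [h0, Polynomial.degree_zero]; exact WithBot.bot_lt_coe _
        · have hlt : (P c).degree < ((2 * p ^ 1 : ℕ) : WithBot ℕ) := degree_P_lt c
          rw [hq0] at hlt
          have h2 := (Polynomial.natDegree_lt_iff_degree_lt (mul_ne_zero hgne h0)).2 hlt
          rw [Polynomial.natDegree_mul hgne h0, hgdeg, hn2p] at h2
          exact (Polynomial.natDegree_lt_iff_degree_lt h0).1 (by omega)
      refine ⟨fun j : Fin (p - i) => q0.coeff (j : ℕ), ?_⟩
      apply Subtype.ext
      funext k
      show (g * P (fun j : Fin (p - i) => q0.coeff (j : ℕ))).coeff (k : ℕ) = c k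
      rw [P_vec q0 hqdeg, ← hq0]
      have hck := coeff_P c (k : ℕ)
      rw [dif_pos k.isLt] at hck
      simpa using hck
  have goal1 : Nat.card (Cij p 1 i p δ) = (p ^ m) ^ (p - i) := by
    rw [← Nat.card_congr (Equiv.ofBijective Φ hbij), Nat.card_eq_fintype_card,
      Fintype.card_fun, Fintype.card_fin, hcard]
  -- min distance
  have hwt : ∀ c ∈ Cij p 1 i p δ, c ≠ 0 → ∃ a : F[X], a ≠ 0 ∧ (X - C δ) ^ i ∣ a ∧
      a.natDegree ≤ p - 1 ∧ hammingNorm c = 2 * a.support.card := by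
    intro c hc hcne
    obtain ⟨a, hdvd, hadeg, hane0, hform⟩ := rep c hc
    have hane := hane0 hcne
    have hXpu : ((X : F[X]) ^ p + C u) ≠ 0 := by
      intro h
      have h2 := congrArg (fun q => Polynomial.natDegree q) h
      simp only [natDegree_X_pow_add_C, natDegree_zero] at h2
      omega
    have hbdeg : (a * (X ^ p + C u)).degree < ((2 * p ^ 1 : ℕ) : WithBot ℕ) := by
      have hlt : (a * (X ^ p + C u)).natDegree < 2 * p ^ 1 := by
        rw [Polynomial.natDegree_mul hane hXpu, natDegree_X_pow_add_C, hn2p]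
        omega
      exact (Polynomial.natDegree_lt_iff_degree_lt (mul_ne_zero hane hXpu)).1 hlt
    have hPc : P c = a * (X ^ p + C u) := by
      rw [show c = fun k : Fin (2 * p ^ 1) => (a * (X ^ p + C u)).coeff (k : ℕ) from funext hform]
      exact P_vec _ hbdeg
    refine ⟨a, hane, hdvd, hadeg, ?_⟩
    rw [hammingNorm_eq, hPc,
      show a * ((X : F[X]) ^ p + C u) = a * X ^ p + C u * a by ring]
    exact support_card_shift (by omega) hu a hadeg
  have goal2 : minDistIs (Cij p 1 i p δ) (2 * (i + 1)) := by
    constructor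
    · have h1 := mk 1 (by simp)
      set c0 : Fin (2 * p ^ 1) → F := fun k => (g * 1).coeff (k : ℕ) with hc0_def
      have ha0 : ((X - C δ) ^ i).support.card = i + 1 := by
        rw [show ((X : F[X]) - C δ) = X + C (-δ) by rw [map_neg]; ring,
          support_pow_linear hp (neg_ne_zero.2 hδ) hiltp, Finset.card_range]
      have hnorm : hammingNorm c0 = 2 * (i + 1) := by
        rw [hammingNorm_eq, h1.2, mul_one, hg_def, hXp,
          show ((X : F[X]) - C δ) ^ i * (X ^ p + C u)
            = (X - C δ) ^ i * X ^ p + C u * (X - C δ) ^ i by ring,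
          support_card_shift (by omega) hu _
            (by rw [natDegree_pow, natDegree_X_sub_C, mul_one]; omega), ha0]
      refine ⟨c0, h1.1, ?_, hnorm⟩
      intro h
      rw [h, hammingNorm_zero] at hnorm
      omega
    · rintro w ⟨c, hc, hcne, rfl⟩
      obtain ⟨a, hane, hdvd, hadeg, hnorm⟩ := hwt c hc hcne
      rw [hnorm]
      have := support_card_ge hp hδ (p - 1) (by omega) a hane hadeg i hdvd
      omega
  -- locality
  have hloc1 : hasAllSymbolLocality (Cij p 1 i p δ) 1 := by
    intro k
    have hk2p : (k : ℕ) < 2 * p := by have := k.isLt; omega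
    by_cases hkp : (k : ℕ) < p
    · refine ⟨{⟨(k : ℕ) + p, by omega⟩}, ?_, by simp,
        fun v => u * v ⟨⟨(k : ℕ) + p, by omega⟩, Finset.mem_singleton_self _⟩, ?_⟩
      · simp only [Finset.mem_singleton]
        intro h
        have h2 := congrArg Fin.val h
        simp only [] at h2
        omega
      · intro c hc
        obtain ⟨a, hdvd, hadeg, hane, hform⟩ := rep c hc
        show c k = u * c ⟨(k : ℕ) + p, by omega⟩
        rw [hform k, hform ⟨(k : ℕ) + p, by omega⟩]
        rw [coeff_comb u a hadeg (by omega), coeff_comb u a hadeg (by omega)]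
        rw [if_pos hkp, if_neg (show ¬(((⟨(k : ℕ) + p, by omega⟩ : Fin (2 * p ^ 1)) : ℕ) < p) by
          simp only []; omega)]
        have h3 : ((⟨(k : ℕ) + p, by omega⟩ : Fin (2 * p ^ 1)) : ℕ) - p = (k : ℕ) := by
          simp only []; omega
        rw [h3]
    · refine ⟨{⟨(k : ℕ) - p, by omega⟩}, ?_, by simp,
        fun v => u⁻¹ * v ⟨⟨(k : ℕ) - p, by omega⟩, Finset.mem_singleton_self _⟩, ?_⟩
      · simp only [Finset.mem_singleton]
        intro h
        have h2 := congrArg Fin.val h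
        simp only [] at h2
        omega
      · intro c hc
        obtain ⟨a, hdvd, hadeg, hane, hform⟩ := rep c hc
        show c k = u⁻¹ * c ⟨(k : ℕ) - p, by omega⟩
        rw [hform k, hform ⟨(k : ℕ) - p, by omega⟩]
        rw [coeff_comb u a hadeg (by omega), coeff_comb u a hadeg (by omega)]
        rw [if_neg hkp, if_pos (show ((⟨(k : ℕ) - p, by omega⟩ : Fin (2 * p ^ 1)) : ℕ) < p by
          simp only []; omega)]
        have h3 : ((⟨(k : ℕ) - p, by omega⟩ : Fin (2 * p ^ 1)) : ℕ) = (k : ℕ) - p := rfl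
        rw [h3, inv_mul_cancel_left₀ hu]
  have hexist : ∀ k : Fin (2 * p ^ 1), ∃ c ∈ Cij p 1 i p δ, c k ≠ 0 := by
    intro k
    have hk2p : (k : ℕ) < 2 * p := by have := k.isLt; omega
    set k0 : ℕ := if (k : ℕ) < p then (k : ℕ) else (k : ℕ) - p with hk0
    have hk0p : k0 < p := by rw [hk0]; split <;> omega
    set t : ℕ := min k0 (p - 1 - i) with ht
    have h1 := mk (X ^ t) (by rw [natDegree_X_pow]; omega)
    have hcoeffa : ((X - C δ) ^ i * X ^ t).coeff k0 ≠ 0 := by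
      rw [coeff_mul_X_pow', if_pos (by omega)]
      have hmem2 : k0 - t ∈ ((X - C δ) ^ i).support := by
        rw [show ((X : F[X]) - C δ) = X + C (-δ) by rw [map_neg]; ring,
          support_pow_linear hp (neg_ne_zero.2 hδ) hiltp, Finset.mem_range]
        omega
      exact Polynomial.mem_support_iff.1 hmem2
    have hgt : g * X ^ t = ((X - C δ) ^ i * X ^ t) * (X ^ p + C u) := by
      rw [hg_def, hXp]; ring
    have hdeg2 : ((X - C δ) ^ i * X ^ t).natDegree ≤ p - 1 := by
      rw [Polynomial.natDegree_mul (pow_ne_zero _ (X_sub_C_ne_zero δ))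
        (pow_ne_zero _ Polynomial.X_ne_zero), natDegree_pow, natDegree_X_sub_C, mul_one,
        natDegree_X_pow]
      omega
    have hgoal : (g * X ^ t).coeff (k : ℕ) ≠ 0 := by
      rw [hgt, coeff_comb u _ hdeg2 (by omega)]
      split
      · next h =>
        have hh : k0 = (k : ℕ) := by rw [hk0, if_pos h]
        rw [← hh]
        exact mul_ne_zero hu hcoeffa
      · next h =>
        have hh : k0 = (k : ℕ) - p := by rw [hk0, if_neg h]
        rw [← hh]
        exact hcoeffa
    exact ⟨_, h1.1, hgoal⟩
  have goal3 : minLocalityIs (Cij p 1 i p δ) 1 := by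
    constructor
    · exact hloc1
    · intro r' hr'
      by_contra hcon
      have hr0 : r' = 0 := by omega
      subst hr0
      have hpos : 0 < 2 * p ^ 1 := by rw [hn2p]; omega
      obtain ⟨I, hkI, hIcard, f, hf⟩ := hr' ⟨0, hpos⟩
      have hIempty : I = ∅ := Finset.card_eq_zero.1 (Nat.le_zero.1 hIcard)
      subst hIempty
      obtain ⟨c, hc, hck⟩ := hexist ⟨0, hpos⟩
      have h0mem : (0 : Fin (2 * p ^ 1) → F) ∈ Cij p 1 i p δ := by
        apply (hmem 0).2
        have hP0 : P (0 : Fin (2 * p ^ 1) → F) = 0 := by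
          rw [P]; simp
        rw [hP0]
        exact dvd_zero g
      have he1 := hf c hc
      have he2 := hf 0 h0mem
      have harg : (fun j : {x : Fin (2 * p ^ 1) // x ∈ (∅ : Finset (Fin (2 * p ^ 1)))} => c j.1)
          = (fun j => (0 : Fin (2 * p ^ 1) → F) j.1) := by
        funext j
        exact absurd j.2 (Finset.notMem_empty _)
      rw [harg, ← he2] at he1
      simp only [Pi.zero_apply] at he1
      exact hck he1
  have goal4 : (2 * (i + 1) : ℤ) = ((2 * p : ℕ) : ℤ) - ((p - i : ℕ) : ℤ)
      - ((nceil (p - i) 1 : ℕ) : ℤ) + 2 := by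
    have h4 : nceil (p - i) 1 = p - i := by
      show (p - i + 1 - 1) / 1 = p - i
      simp
    rw [h4]
    omega
  exact ⟨goal1, goal2, goal3, goal4⟩
end
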